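/- arXiv:math/0602324 — 4 statements merged into one kernel-verified Lean document; each statement's English description precedes it below -/
import Mathlib

section
/- Let Ω₁ and Ω₂ be adapted families of connection 1-forms which are both h⁻¹-linear. If the reduced operator of Ω₁ equals the reduced operator of Ω₂, then Ω₁ = Ω₂. -/
open MvPolynomial Matrix Finset

noncomputable section

/-- `ℂ[q,h]`: variable `0` is `q`, variable `1` is `h`. -/
abbrev PQH : Type := MvPolynomial (Fin 2) ℂ

/-- weights: `deg q = 2(N-k)`, `deg h = 2`. -/
def wt (N k : ℕ) : Fin 2 → ℤ := ![2 * ((N : ℤ) - (k : ℤ)), 2]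

/-- weighted-homogeneous of degree `d`. -/
def IsHom (N k : ℕ) (p : PQH) (d : ℤ) : Prop :=
  p.IsWeightedHomogeneous (wt N k) d

/-- substitution `q = 0`. -/
def q0 : PQH →ₐ[ℂ] PQH := aeval ![0, X 1]

abbrev Mat (N : ℕ) := Matrix (Fin (N - 1)) (Fin (N - 1)) PQH

/-- the matrix `I₋₁`: entries `(i+1, i)` equal to `1`, all other entries `0`. -/
def Im1 (N : ℕ) : Mat N := fun i j => if (i : ℕ) = (j : ℕ) + 1 then 1 else 0

/-- adapted gauge transformation: entries weighted-homogeneous of degree `2(j-i)`,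
and `U(0,h) = I`. -/
structure IsAdaptedGauge (N k : ℕ) (U : Mat N) : Prop where
  homog : ∀ i j, IsHom N k (U i j) (2 * ((j : ℤ) - (i : ℤ)))
  init : U.map ⇑q0 = 1

/-- adapted family of connection 1-forms `Ω = (1/h) R dt`, as a condition on `R`:
entries weighted-homogeneous of degree `2(j-i)+2`, `R(0,h) = I₋₁`, and all
`(i+1,i)` entries equal to `1`. -/
structure IsAdaptedConn (N k : ℕ) (R : Mat N) : Prop where
  homog : ∀ i j, IsHom N k (R i j) (2 * ((j : ℤ) - (i : ℤ)) + 2)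
  init : R.map ⇑q0 = Im1 N
  subdiag : ∀ i j : Fin (N - 1), (i : ℕ) = (j : ℕ) + 1 → R i j = 1

/-- `h⁻¹`-linear: the variable `h` does not occur in the entries of `R`. -/
def IsHinvLinear (N : ℕ) (R : Mat N) : Prop :=
  ∀ i j, ∀ m ∈ (R i j).support, m 1 = 0

/-- the gauge action `U*Ω` on the level of the matrix `R`:
`R' = U⁻¹ R U + h q U⁻¹ (∂U/∂q)`. -/
def gaugeAct (N : ℕ) (U R : Mat N) : Mat N :=
  U⁻¹ * R * U + (X 1 * X 0 : PQH) • (U⁻¹ * U.map (fun p => pderiv 0 p))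

/-- the derivation `D = q d/dq` of `ℂ[q,h]`, as a `ℂ`-linear endomorphism. -/
def Dop : Module.End ℂ PQH := (LinearMap.mulLeft ℂ (X 0 : PQH)) ∘ₗ (pderiv 0).toLinearMap

/-- multiplication by a polynomial, as a differential operator. -/
def mulOp (c : PQH) : Module.End ℂ PQH := LinearMap.mulLeft ℂ c

/-- the operator `hD`. -/
def hD : Module.End ℂ PQH := mulOp (X 1) * Dop

/-- the operators attached to an adapted family `Ω = (1/h) R dt`: `P₀ = 1`,
`P_{β+1} = (hD)∘P_β − Σ_{α=0}^{β} r_{α,β}·P_α`; `Pops N R (N-1)` is the reduced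
operator of `Ω`. -/
def Pops (N : ℕ) (R : Mat N) : ℕ → Module.End ℂ PQH
  | 0 => 1
  | β + 1 =>
      hD * Pops N R β -
        ∑ α : Fin (β + 1),
          (if h : (α : ℕ) < N - 1 ∧ β < N - 1 then
            mulOp (R ⟨α, h.1⟩ ⟨β, h.2⟩) * Pops N R α
          else 0)
  termination_by β => β
  decreasing_by
  · exact Nat.lt_succ_self β
  · exact α.is_lt

/-- `σ_{β,γ}` attached to an adapted family `R`:
`σ_{0,0} = 1`, `σ_{β+1,γ} = σ_{β,γ−1} + q h ∂σ_{β,γ}/∂q − Σ_{α=γ}^{β} r_{α,β} σ_{α,γ}`,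
with the conventions `σ_{β,γ} = 0` for `γ < 0` or `γ > β` (which this definition obeys). -/
def sigmaC (N : ℕ) (R : Mat N) : ℕ → ℕ → PQH
  | 0, 0 => 1
  | 0, _ + 1 => 0
  | β + 1, γ =>
      (match γ with
        | 0 => 0
        | γ' + 1 => sigmaC N R β γ') +
      X 0 * X 1 * pderiv 0 (sigmaC N R β γ) -
      ∑ α : Fin (β + 1),
        (if h : γ ≤ (α : ℕ) ∧ (α : ℕ) < N - 1 ∧ β < N - 1 then
          R ⟨α, h.2.1⟩ ⟨β, h.2.2⟩ * sigmaC N R α γ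
        else 0)
  termination_by β _ => β
  decreasing_by
  · exact Nat.lt_succ_self β
  · exact Nat.lt_succ_self β
  · exact α.is_lt

/-- the integers `λᵢᵏ` defined by `k ∏_{j=1}^{k-1} (kX+j) = Σᵢ λᵢᵏ Xⁱ`. -/
def lam (k i : ℕ) : ℤ :=
  ((k : Polynomial ℤ) *
    ∏ j ∈ Finset.Icc 1 (k - 1),
      ((k : Polynomial ℤ) * Polynomial.X + (j : Polynomial ℤ))).coeff i

/-- the Picard–Fuchs operator
`P^{N,k} = (hD)^{N−1} − q (λ_{k−1}(hD)^{k−1} + λ_{k−2} h (hD)^{k−2} + ⋯ + λ₀ h^{k−1})`. -/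
def PNK (N k : ℕ) : Module.End ℂ PQH :=
  hD ^ (N - 1) -
    ∑ i ∈ Finset.range k,
      mulOp (C ((lam k i : ℤ) : ℂ) * X 0 * X 1 ^ (k - 1 - i)) * hD ^ i

namespace Aux

abbrev E (a b : ℕ) : Fin 2 →₀ ℕ := Finsupp.single 0 a + Finsupp.single 1 b

lemma E_apply_0 (a b : ℕ) : E a b 0 = a := by simp [E]
lemma E_apply_1 (a b : ℕ) : E a b 1 = b := by simp [E]

lemma eq_E (m : Fin 2 →₀ ℕ) : m = E (m 0) (m 1) := by
  ext i; fin_cases i <;> simp [E]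

lemma E_inj {a b a' b' : ℕ} (h : E a b = E a' b') : a = a' ∧ b = b' := by
  constructor
  · have := congrArg (fun f => f 0) h; simpa using this
  · have := congrArg (fun f => f 1) h; simpa using this

def cf (a b : ℕ) (p : PQH) : ℂ := MvPolynomial.coeff (E a b) p

lemma cf_sub (a b : ℕ) (p q : PQH) : cf a b (p - q) = cf a b p - cf a b q := by
  simp [cf, MvPolynomial.coeff_sub]

lemma cf_add (a b : ℕ) (p q : PQH) : cf a b (p + q) = cf a b p + cf a b q := by
  simp [cf, MvPolynomial.coeff_add]

lemma cf_zero (a b : ℕ) : cf a b (0 : PQH) = 0 := by simp [cf]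

lemma cf_one (a b : ℕ) : cf a b (1 : PQH) = if a = 0 ∧ b = 0 then 1 else 0 := by
  rw [cf, show (1 : PQH) = MvPolynomial.monomial 0 1 by simp, MvPolynomial.coeff_monomial]
  congr 1
  · simp only [eq_iff_iff]
    constructor
    · intro h
      have h0 := congrArg (fun f => f 0) h.symm
      have h1 := congrArg (fun f => f 1) h.symm
      simp at h0 h1
      exact ⟨h0, h1⟩
    · rintro ⟨rfl, rfl⟩; simp [E]

lemma Dop_apply (p : PQH) : Dop p = X 0 * pderiv 0 p := rfl

lemma Dop_monomial (s : Fin 2 →₀ ℕ) (c : ℂ) :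
    Dop (monomial s c) = monomial s (c * s 0) := by
  rw [Dop_apply, pderiv_monomial]
  rcases Nat.eq_zero_or_pos (s 0) with hs | hs
  · simp [hs]
  · have hs' : Finsupp.single (0 : Fin 2) 1 + (s - Finsupp.single 0 1) = s := by
      ext i
      fin_cases i <;> simp [Finsupp.single_apply, Finsupp.tsub_apply] <;> omega
    rw [X, monomial_mul, one_mul, hs']

lemma cf_Dop (a b : ℕ) (p : PQH) : cf a b (Dop p) = a * cf a b p := by
  induction p using MvPolynomial.induction_on' with
  | monomial s c =>
    rw [Dop_monomial]
    simp only [cf, MvPolynomial.coeff_monomial]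
    split
    · next h => rw [h, E_apply_0]; ring
    · ring
  | add p q hp hq => rw [map_add, cf_add, cf_add, hp, hq]; ring

end Aux
namespace Aux

lemma E_sub_single1 {a b : ℕ} (hb : b ≠ 0) :
    E a b - Finsupp.single 1 1 = E a (b - 1) := by
  ext i; fin_cases i <;> simp [Finsupp.single_apply, Finsupp.tsub_apply]

lemma cf_X1mul (a b : ℕ) (p : PQH) :
    cf a b (X 1 * p) = if b = 0 then 0 else cf a (b - 1) p := by
  rw [cf, MvPolynomial.coeff_X_mul']
  rcases eq_or_ne b 0 with rfl | hb
  · simp [Finsupp.mem_support_iff]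
  · rw [if_pos, if_neg hb, E_sub_single1 hb, cf]
    simp [Finsupp.mem_support_iff, hb]

lemma qhd_eq (p : PQH) : X 0 * X 1 * pderiv 0 p = X 1 * Dop p := by
  rw [Dop_apply]; ring

lemma cf_qhd (a b : ℕ) (p : PQH) :
    cf a b (X 0 * X 1 * pderiv 0 p) =
      if b = 0 then 0 else (a : ℂ) * cf a (b - 1) p := by
  rw [qhd_eq, cf_X1mul]
  split
  · rfl
  · rw [cf_Dop]

lemma cf_CXpow (a b : ℕ) (c : ℂ) (m : ℕ) :
    cf a b (C c * X 0 ^ m) = if m = a ∧ b = 0 then c else 0 := by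
  rw [MvPolynomial.C_mul_X_pow_eq_monomial, cf, MvPolynomial.coeff_monomial]
  congr 1
  simp only [eq_iff_iff]
  constructor
  · intro h
    have h0 := congrArg (fun f => f 0) h
    have h1 := congrArg (fun f => f 1) h
    simp [Finsupp.single_apply] at h0 h1
    exact ⟨h0, h1.symm⟩
  · rintro ⟨rfl, rfl⟩
    ext i; fin_cases i <;> simp

lemma E_sub_single0m {a b m : ℕ} (hm : m ≤ a) :
    E a b - Finsupp.single 0 m = E (a - m) b := by
  ext i; fin_cases i <;> simp [Finsupp.single_apply, Finsupp.tsub_apply]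

lemma cf_CXpow_mul (a b : ℕ) (c : ℂ) (m : ℕ) (p : PQH) :
    cf a b (C c * X 0 ^ m * p) = if m ≤ a then c * cf (a - m) b p else 0 := by
  rw [MvPolynomial.C_mul_X_pow_eq_monomial, cf, MvPolynomial.coeff_monomial_mul']
  rcases le_or_gt m a with hm | hm
  · rw [if_pos, if_pos hm, E_sub_single0m hm, cf]
    rw [Finsupp.single_le_iff, E_apply_0]; exact hm
  · rw [if_neg, if_neg (by omega)]
    rw [Finsupp.single_le_iff, E_apply_0]; omega

lemma weight_E (N k : ℕ) (a b : ℕ) :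
    Finsupp.weight (wt N k) (E a b) = (a : ℤ) * (2 * ((N : ℤ) - (k : ℤ))) + (b : ℤ) * 2 := by
  rw [E, map_add, Finsupp.weight_apply, Finsupp.weight_apply,
      Finsupp.sum_single_index (by simp), Finsupp.sum_single_index (by simp)]
  simp only [wt, smul_eq_mul, nsmul_eq_mul]
  norm_num [Matrix.cons_val_zero, Matrix.cons_val_one]

/-- key structure lemma: an `h`-free weighted-homogeneous polynomial of degree `2w`
is a monomial `c qᵐ` with `m (N-k) = w` (when nonzero). -/
lemma shape (N k : ℕ) (hkN : k < N) (w : ℕ) (p : PQH)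
    (hf : ∀ m ∈ p.support, m 1 = 0)
    (hh : IsHom N k p (2 * (w : ℤ))) :
    ∃ (c : ℂ) (m : ℕ), p = C c * X 0 ^ m ∧ (c ≠ 0 → m * (N - k) = w) := by
  rcases eq_or_ne p 0 with rfl | hp
  · exact ⟨0, 0, by simp, by simp⟩
  · obtain ⟨m₀, hm₀⟩ := MvPolynomial.ne_zero_iff.mp hp
    have hb0 : m₀ 1 = 0 := hf m₀ (MvPolynomial.mem_support_iff.mpr hm₀)
    have hw0 : Finsupp.weight (wt N k) m₀ = 2 * (w : ℤ) := hh hm₀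
    have hNk : (0 : ℤ) < (N : ℤ) - (k : ℤ) := by
      have := hkN; omega
    have hdeg : (m₀ 0 : ℤ) * ((N : ℤ) - (k : ℤ)) = (w : ℤ) := by
      rw [eq_E m₀, hb0] at hw0
      rw [weight_E] at hw0
      push_cast at hw0 ⊢
      linarith
    have hm0E : Finsupp.single (0 : Fin 2) (m₀ 0) = m₀ := by
      conv_rhs => rw [eq_E m₀]
      rw [hb0]; simp [E]
    refine ⟨MvPolynomial.coeff m₀ p, m₀ 0, ?_, ?_⟩
    · rw [MvPolynomial.C_mul_X_pow_eq_monomial, hm0E]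
      ext m'
      rw [MvPolynomial.coeff_monomial]
      rcases eq_or_ne m₀ m' with heq | hne
      · rw [if_pos heq, heq]
      · rw [if_neg hne]
        by_contra hc
        have hb' : m' 1 = 0 := hf m' (MvPolynomial.mem_support_iff.mpr hc)
        have hw' := hh hc
        rw [eq_E m', hb', weight_E] at hw'
        have h1 : (m' 0 : ℤ) * ((N : ℤ) - (k : ℤ)) = (w : ℤ) := by
          push_cast at hw' ⊢; linarith
        have h00 : (m' 0 : ℤ) = (m₀ 0 : ℤ) :=
          mul_right_cancel₀ (ne_of_gt hNk) (h1.trans hdeg.symm)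
        have h00' : m' 0 = m₀ 0 := by exact_mod_cast h00
        exact hne (by rw [eq_E m₀, eq_E m', hb0, hb', h00'])
    · intro _
      zify [le_of_lt hkN]
      exact hdeg

/-- a weighted-homogeneous polynomial of negative degree is zero. -/
lemma homog_neg_zero (N k : ℕ) (hkN : k < N) (p : PQH) (d : ℤ) (hd : d < 0)
    (hh : IsHom N k p d) : p = 0 := by
  ext m
  rw [MvPolynomial.coeff_zero]
  by_contra hc
  have hw := hh hc
  rw [eq_E m, weight_E] at hw
  have hNk : (0 : ℤ) ≤ (N : ℤ) - (k : ℤ) := by omega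
  nlinarith [Nat.cast_nonneg (α := ℤ) (m 0), Nat.cast_nonneg (α := ℤ) (m 1)]

end Aux
namespace Aux

lemma sigmaC_zero_zero (N : ℕ) (R : Mat N) : sigmaC N R 0 0 = 1 := by rw [sigmaC]

lemma sigmaC_zero_succ (N : ℕ) (R : Mat N) (γ : ℕ) : sigmaC N R 0 (γ + 1) = 0 := by
  rw [sigmaC]

lemma sigmaC_succ (N : ℕ) (R : Mat N) (β γ : ℕ) :
    sigmaC N R (β + 1) γ =
      (match γ with
        | 0 => 0
        | γ' + 1 => sigmaC N R β γ') +
      X 0 * X 1 * pderiv 0 (sigmaC N R β γ) -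
      ∑ α : Fin (β + 1),
        (if h : γ ≤ (α : ℕ) ∧ (α : ℕ) < N - 1 ∧ β < N - 1 then
          R ⟨α, h.2.1⟩ ⟨β, h.2.2⟩ * sigmaC N R α γ
        else 0) := by
  conv_lhs => rw [sigmaC.eq_def]

/-- `σ_{β,γ} = 0` for `γ > β`. -/
lemma sigmaC_eq_zero (N : ℕ) (R : Mat N) :
    ∀ β γ : ℕ, β < γ → sigmaC N R β γ = 0 := by
  intro β
  induction β with
  | zero =>
    intro γ hγ
    match γ, hγ with
    | γ' + 1, _ => exact sigmaC_zero_succ N R γ'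
  | succ β ih =>
    intro γ hγ
    obtain ⟨γ', rfl⟩ : ∃ γ', γ = γ' + 1 := ⟨γ - 1, by omega⟩
    rw [sigmaC_succ]
    show sigmaC N R β γ' + X 0 * X 1 * pderiv 0 (sigmaC N R β (γ' + 1)) - _ = 0
    rw [ih γ' (by omega), ih (γ' + 1) (by omega)]
    have h2 : ∀ α : Fin (β + 1),
        (if h : γ' + 1 ≤ (α : ℕ) ∧ (α : ℕ) < N - 1 ∧ β < N - 1 then
          R ⟨α, h.2.1⟩ ⟨β, h.2.2⟩ * sigmaC N R α (γ' + 1)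
        else 0) = (0 : PQH) := by
      intro α
      rw [dif_neg]
      rintro ⟨hγα, -, -⟩
      have := α.is_lt
      omega
    rw [Finset.sum_congr rfl fun α _ => h2 α]
    simp

/-- the recursion in clean form, for `β < N - 1`. -/
lemma sigmaC_step (N : ℕ) (R : Mat N) (β γ : ℕ) (hβ : β < N - 1) :
    sigmaC N R (β + 1) γ =
      (match γ with
        | 0 => 0
        | γ' + 1 => sigmaC N R β γ') +
      X 0 * X 1 * pderiv 0 (sigmaC N R β γ) -
      ∑ α : Fin (β + 1),
        R ⟨α, lt_of_lt_of_le α.is_lt (by omega)⟩ ⟨β, hβ⟩ * sigmaC N R α γ := by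
  rw [sigmaC_succ]
  congr 1
  apply Finset.sum_congr rfl
  intro α _
  have hα : (α : ℕ) < N - 1 := lt_of_lt_of_le α.is_lt (by omega)
  by_cases hγα : γ ≤ (α : ℕ)
  · rw [dif_pos ⟨hγα, hα, hβ⟩]
  · rw [dif_neg (by tauto), sigmaC_eq_zero N R α γ (by omega), mul_zero]

end Aux
namespace Aux

/-- entries are monomials `c qᵐ` with `m(N-k) = j-i+1`, `m ≥ 1`. -/
def Ent (N k : ℕ) (R : Mat N) : Prop :=
  ∀ (i j : Fin (N - 1)), (i : ℕ) ≤ (j : ℕ) →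
    ∃ (c : ℂ) (m : ℕ), R i j = C c * X 0 ^ m ∧
      (c ≠ 0 → m * (N - k) = (j : ℕ) - (i : ℕ) + 1 ∧ 1 ≤ m)

lemma shape' (N k : ℕ) (hkN : k < N) (i j : Fin (N - 1)) (hij : (i : ℕ) ≤ (j : ℕ))
    (p : PQH) (hf : ∀ m ∈ p.support, m 1 = 0)
    (hh : IsHom N k p (2 * ((j : ℤ) - (i : ℤ)) + 2)) :
    ∃ (c : ℂ) (m : ℕ), p = C c * X 0 ^ m ∧
      (c ≠ 0 → m * (N - k) = (j : ℕ) - (i : ℕ) + 1 ∧ 1 ≤ m) := by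
  have hdeg : (2 * (((j : ℕ) - (i : ℕ) + 1 : ℕ) : ℤ)) = 2 * ((j : ℤ) - (i : ℤ)) + 2 := by
    push_cast [Nat.cast_sub hij]; ring
  have hh' : IsHom N k p (2 * (((j : ℕ) - (i : ℕ) + 1 : ℕ) : ℤ)) := by
    rw [hdeg]; exact hh
  obtain ⟨c, m, hp, hc⟩ := shape N k hkN _ p hf hh'
  refine ⟨c, m, hp, fun hc0 => ⟨hc hc0, ?_⟩⟩
  have := hc hc0
  rcases Nat.eq_zero_or_pos m with rfl | hm
  · omega
  · exact hm

lemma ent_of (N k : ℕ) (hkN : k < N) (R : Mat N)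
    (h : IsAdaptedConn N k R) (hl : IsHinvLinear N R) : Ent N k R := by
  intro i j hij
  exact shape' N k hkN i j hij _ (hl i j) (h.homog i j)

lemma ent_sub (N k : ℕ) (hkN : k < N) (R₁ R₂ : Mat N)
    (h₁ : IsAdaptedConn N k R₁) (h₂ : IsAdaptedConn N k R₂)
    (hl₁ : IsHinvLinear N R₁) (hl₂ : IsHinvLinear N R₂) :
    Ent N k (R₁ - R₂) := by
  intro i j hij
  apply shape' N k hkN i j hij
  · intro m hm
    have hne : MvPolynomial.coeff m ((R₁ - R₂) i j) ≠ 0 := MvPolynomial.mem_support_iff.mp hm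
    rw [Matrix.sub_apply, MvPolynomial.coeff_sub] at hne
    by_cases h1 : MvPolynomial.coeff m (R₁ i j) = 0
    · have h2 : MvPolynomial.coeff m (R₂ i j) ≠ 0 := by
        intro h2; exact hne (by rw [h1, h2, sub_zero])
      exact hl₂ i j m (MvPolynomial.mem_support_iff.mpr h2)
    · exact hl₁ i j m (MvPolynomial.mem_support_iff.mpr h1)
  · have m1 := (MvPolynomial.mem_weightedHomogeneousSubmodule _ _ _ _).mpr (h₁.homog i j)
    have m2 := (MvPolynomial.mem_weightedHomogeneousSubmodule _ _ _ _).mpr (h₂.homog i j)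
    have := Submodule.sub_mem _ m1 m2
    rw [← Matrix.sub_apply] at this
    exact (MvPolynomial.mem_weightedHomogeneousSubmodule _ _ _ _).mp this

/-- the `q = 0` coefficients of `σ_{β,γ}` form the identity (Kronecker delta). -/
lemma cf0_sigma (N k : ℕ) (R : Mat N) (hE : Ent N k R) :
    ∀ β, β ≤ N - 1 → ∀ γ j, cf 0 j (sigmaC N R β γ) =
      if γ = β ∧ j = 0 then 1 else 0 := by
  intro β
  induction β with
  | zero =>
    intro _ γ j
    match γ with
    | 0 => rw [sigmaC_zero_zero, cf_one]
    | γ' + 1 =>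
      rw [sigmaC_zero_succ, cf_zero, if_neg]
      rintro ⟨h, -⟩; omega
  | succ β ih =>
    intro hβ' γ j
    have hβ : β < N - 1 := by omega
    rw [sigmaC_step N R β γ hβ, cf_sub, cf_add, cf_qhd]
    have hsum : cf 0 j (∑ α : Fin (β + 1),
        R ⟨α, lt_of_lt_of_le α.is_lt (by omega)⟩ ⟨β, hβ⟩ * sigmaC N R α γ) = 0 := by
      rw [cf, MvPolynomial.coeff_sum]
      apply Finset.sum_eq_zero
      intro α _
      obtain ⟨c, m, hRm, hcm⟩ := hE ⟨α, lt_of_lt_of_le α.is_lt (by omega)⟩ ⟨β, hβ⟩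
        (by simpa using Nat.lt_succ_iff.mp α.is_lt)
      rw [hRm]
      by_cases hc : c = 0
      · simp [hc]
      · rw [show MvPolynomial.coeff (E 0 j) (C c * X 0 ^ m * sigmaC N R α γ) =
            cf 0 j (C c * X 0 ^ m * sigmaC N R α γ) from rfl, cf_CXpow_mul, if_neg]
        have := (hcm hc).2
        omega
    rw [hsum]
    have hqd : (if j = 0 then 0 else ((0 : ℕ) : ℂ) * cf 0 (j - 1) (sigmaC N R β γ)) = 0 := by
      split <;> simp
    rw [hqd]
    match γ with
    | 0 =>
      rw [cf_zero, if_neg]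
      · ring
      · rintro ⟨h, -⟩; omega
    | γ' + 1 =>
      rw [ih (by omega) γ' j]
      by_cases hcase : γ' = β ∧ j = 0
      · rw [if_pos hcase, if_pos ⟨by omega, hcase.2⟩]; ring
      · rw [if_neg hcase, if_neg (by rintro ⟨h1, h2⟩; exact hcase ⟨by omega, h2⟩)]; ring

end Aux
namespace Aux

def Del (N : ℕ) (R₁ R₂ : Mat N) (β γ : ℕ) : PQH :=
  sigmaC N R₁ β γ - sigmaC N R₂ β γ

lemma Del_zero (N : ℕ) (R₁ R₂ : Mat N) (γ : ℕ) : Del N R₁ R₂ 0 γ = 0 := by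
  unfold Del
  match γ with
  | 0 => rw [sigmaC_zero_zero, sigmaC_zero_zero, sub_self]
  | γ' + 1 => rw [sigmaC_zero_succ, sigmaC_zero_succ, sub_self]

lemma Del_step (N : ℕ) (R₁ R₂ : Mat N) (β γ : ℕ) (hβ : β < N - 1) :
    Del N R₁ R₂ (β + 1) γ =
      (match γ with | 0 => 0 | γ' + 1 => Del N R₁ R₂ β γ') +
      X 0 * X 1 * pderiv 0 (Del N R₁ R₂ β γ) -
      ∑ α : Fin (β + 1),
        ((R₁ - R₂) ⟨α, lt_of_lt_of_le α.is_lt (by omega)⟩ ⟨β, hβ⟩ * sigmaC N R₁ α γ +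
         R₂ ⟨α, lt_of_lt_of_le α.is_lt (by omega)⟩ ⟨β, hβ⟩ * Del N R₁ R₂ α γ) := by
  have hsum : (∑ α : Fin (β + 1),
        R₁ ⟨α, lt_of_lt_of_le α.is_lt (by omega)⟩ ⟨β, hβ⟩ * sigmaC N R₁ α γ) -
      (∑ α : Fin (β + 1),
        R₂ ⟨α, lt_of_lt_of_le α.is_lt (by omega)⟩ ⟨β, hβ⟩ * sigmaC N R₂ α γ) =
      ∑ α : Fin (β + 1),
        ((R₁ - R₂) ⟨α, lt_of_lt_of_le α.is_lt (by omega)⟩ ⟨β, hβ⟩ * sigmaC N R₁ α γ +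
         R₂ ⟨α, lt_of_lt_of_le α.is_lt (by omega)⟩ ⟨β, hβ⟩ * Del N R₁ R₂ α γ) := by
    rw [← Finset.sum_sub_distrib]
    apply Finset.sum_congr rfl
    intro α _
    rw [Matrix.sub_apply]
    unfold Del
    ring
  show sigmaC N R₁ (β + 1) γ - sigmaC N R₂ (β + 1) γ = _
  rw [sigmaC_step N R₁ β γ hβ, sigmaC_step N R₂ β γ hβ, ← hsum]
  match γ with
  | 0 =>
    show _ = (0 : PQH) + X 0 * X 1 * pderiv 0 (sigmaC N R₁ β 0 - sigmaC N R₂ β 0) - _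
    rw [map_sub]
    ring
  | γ' + 1 =>
    show _ = (sigmaC N R₁ β γ' - sigmaC N R₂ β γ') +
      X 0 * X 1 * pderiv 0 (sigmaC N R₁ β (γ' + 1) - sigmaC N R₂ β (γ' + 1)) - _
    rw [map_sub]
    ring

/-- Claim A: all `q`-coefficients of `Δσ` below the minimal level `d₀` vanish. -/
lemma claimA (N k : ℕ) (hkN : k < N) (R₁ R₂ : Mat N)
    (hE2 : Ent N k R₂) (hEd : Ent N k (R₁ - R₂)) (d₀ : ℕ)
    (hmin : ∀ a < d₀, ∀ i j : Fin (N - 1), (i : ℕ) ≤ (j : ℕ) →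
      cf a 0 ((R₁ - R₂) i j) = 0) :
    ∀ β, β ≤ N - 1 → ∀ γ j a, a < d₀ → cf a j (Del N R₁ R₂ β γ) = 0 := by
  intro β
  induction β using Nat.strong_induction_on with
  | _ β ih =>
    match β with
    | 0 => intro _ γ j a _; rw [Del_zero, cf_zero]
    | β + 1 =>
      intro hβ' γ j a ha
      have hβ : β < N - 1 := by omega
      rw [Del_step N R₁ R₂ β γ hβ, cf_sub, cf_add, cf_qhd]
      have hmatch : cf a j (match γ with | 0 => (0 : PQH) | γ' + 1 => Del N R₁ R₂ β γ') = 0 := by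
        match γ with
        | 0 => exact cf_zero a j
        | γ' + 1 => exact ih β (by omega) (by omega) γ' j a ha
      rw [hmatch]
      have hqd : (if j = 0 then 0 else (a : ℂ) * cf a (j - 1) (Del N R₁ R₂ β γ)) = 0 := by
        split
        · rfl
        · rw [ih β (by omega) (by omega) γ (j - 1) a ha, mul_zero]
      rw [hqd]
      have hsum : cf a j (∑ α : Fin (β + 1),
          ((R₁ - R₂) ⟨α, lt_of_lt_of_le α.is_lt (by omega)⟩ ⟨β, hβ⟩ * sigmaC N R₁ α γ +
           R₂ ⟨α, lt_of_lt_of_le α.is_lt (by omega)⟩ ⟨β, hβ⟩ * Del N R₁ R₂ α γ)) = 0 := by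
        rw [cf, MvPolynomial.coeff_sum]
        apply Finset.sum_eq_zero
        intro α _
        have hα : (α : ℕ) < N - 1 := lt_of_lt_of_le α.is_lt (by omega)
        have hαβ : (α : ℕ) ≤ β := by simpa using Nat.lt_succ_iff.mp α.is_lt
        rw [show MvPolynomial.coeff (E a j) _ = cf a j
          ((R₁ - R₂) ⟨α, hα⟩ ⟨β, hβ⟩ * sigmaC N R₁ α γ +
           R₂ ⟨α, hα⟩ ⟨β, hβ⟩ * Del N R₁ R₂ α γ) from rfl, cf_add]
        have hδ : cf a j ((R₁ - R₂) ⟨α, hα⟩ ⟨β, hβ⟩ * sigmaC N R₁ α γ) = 0 := by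
          obtain ⟨c, m, heq, hcm⟩ := hEd ⟨α, hα⟩ ⟨β, hβ⟩ hαβ
          rw [heq]
          by_cases hc : c = 0
          · simp [hc, cf_zero]
          · rw [cf_CXpow_mul, if_neg]
            intro hma
            have hc0 := hmin m (by omega) ⟨α, hα⟩ ⟨β, hβ⟩ hαβ
            rw [heq, cf_CXpow, if_pos ⟨rfl, rfl⟩] at hc0
            exact hc hc0
        have hR : cf a j (R₂ ⟨α, hα⟩ ⟨β, hβ⟩ * Del N R₁ R₂ α γ) = 0 := by
          obtain ⟨c, m, heq, hcm⟩ := hE2 ⟨α, hα⟩ ⟨β, hβ⟩ hαβ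
          rw [heq]
          by_cases hc : c = 0
          · simp [hc, cf_zero]
          · rw [cf_CXpow_mul]
            split
            · rw [ih α (by omega) (by omega) γ j (a - m) (by omega), mul_zero]
            · rfl
        rw [hδ, hR, add_zero]
      rw [hsum]
      ring

end Aux
namespace Aux

/-- the recursion for the `q^{d₀}`-coefficients of `Δσ`. -/
lemma claimB (N k : ℕ) (hkN : k < N) (R₁ R₂ : Mat N)
    (hE1 : Ent N k R₁) (hE2 : Ent N k R₂) (hEd : Ent N k (R₁ - R₂)) (d₀ : ℕ)
    (hmin : ∀ a < d₀, ∀ i j : Fin (N - 1), (i : ℕ) ≤ (j : ℕ) →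
      cf a 0 ((R₁ - R₂) i j) = 0)
    (β γ j : ℕ) (hβ : β < N - 1) :
    cf d₀ j (Del N R₁ R₂ (β + 1) γ) =
      (match γ with | 0 => 0 | γ' + 1 => cf d₀ j (Del N R₁ R₂ β γ')) +
      (if j = 0 then 0 else (d₀ : ℂ) * cf d₀ (j - 1) (Del N R₁ R₂ β γ)) -
      (if h : γ ≤ β ∧ j = 0 then
        cf d₀ 0 ((R₁ - R₂) ⟨γ, lt_of_le_of_lt h.1 hβ⟩ ⟨β, hβ⟩) else 0) := by
  rw [Del_step N R₁ R₂ β γ hβ, cf_sub, cf_add, cf_qhd]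
  have hmatch : cf d₀ j (match γ with | 0 => (0 : PQH) | γ' + 1 => Del N R₁ R₂ β γ') =
      (match γ with | 0 => (0 : ℂ) | γ' + 1 => cf d₀ j (Del N R₁ R₂ β γ')) := by
    match γ with
    | 0 => exact cf_zero _ _
    | γ' + 1 => rfl
  rw [hmatch]
  congr 1
  -- remains: the sum term
  rw [cf, MvPolynomial.coeff_sum]
  have hterm : ∀ α : Fin (β + 1),
      MvPolynomial.coeff (E d₀ j)
        ((R₁ - R₂) ⟨α, lt_of_lt_of_le α.is_lt (by omega)⟩ ⟨β, hβ⟩ * sigmaC N R₁ α γ +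
         R₂ ⟨α, lt_of_lt_of_le α.is_lt (by omega)⟩ ⟨β, hβ⟩ * Del N R₁ R₂ α γ) =
      (if (α : ℕ) = γ ∧ j = 0 then
        cf d₀ 0 ((R₁ - R₂) ⟨α, lt_of_lt_of_le α.is_lt (by omega)⟩ ⟨β, hβ⟩) else 0) := by
    intro α
    have hα : (α : ℕ) < N - 1 := lt_of_lt_of_le α.is_lt (by omega)
    have hαβ : (α : ℕ) ≤ β := by simpa using Nat.lt_succ_iff.mp α.is_lt
    rw [show MvPolynomial.coeff (E d₀ j) _ = cf d₀ j
      ((R₁ - R₂) ⟨α, hα⟩ ⟨β, hβ⟩ * sigmaC N R₁ α γ +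
       R₂ ⟨α, hα⟩ ⟨β, hβ⟩ * Del N R₁ R₂ α γ) from rfl, cf_add]
    have hR : cf d₀ j (R₂ ⟨α, hα⟩ ⟨β, hβ⟩ * Del N R₁ R₂ α γ) = 0 := by
      obtain ⟨c, m, heq, hcm⟩ := hE2 ⟨α, hα⟩ ⟨β, hβ⟩ hαβ
      rw [heq]
      by_cases hc : c = 0
      · simp [hc, cf_zero]
      · rw [cf_CXpow_mul]
        split
        · have hm1 : 1 ≤ m := (hcm hc).2
          rw [claimA N k hkN R₁ R₂ hE2 hEd d₀ hmin α (by omega) γ j (d₀ - m) (by omega),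
            mul_zero]
        · rfl
    rw [hR, add_zero]
    obtain ⟨c, m, heq, hcm⟩ := hEd ⟨α, hα⟩ ⟨β, hβ⟩ hαβ
    rw [heq]
    by_cases hc : c = 0
    · rw [hc]
      simp [cf_zero, cf_CXpow]
    · have hm1 : 1 ≤ m := (hcm hc).2
      rw [cf_CXpow_mul, cf_CXpow]
      rcases lt_trichotomy m d₀ with hmd | hmd | hmd
      · exfalso
        have hc0 := hmin m hmd ⟨α, hα⟩ ⟨β, hβ⟩ hαβ
        rw [heq, cf_CXpow, if_pos ⟨rfl, rfl⟩] at hc0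
        exact hc hc0
      · subst hmd
        rw [if_pos le_rfl, Nat.sub_self,
          cf0_sigma N k R₁ hE1 α (by omega) γ j]
        by_cases hc2 : (α : ℕ) = γ ∧ j = 0
        · rw [if_pos ⟨hc2.1.symm, hc2.2⟩, if_pos hc2, if_pos ⟨rfl, rfl⟩, mul_one]
        · rw [if_neg (fun h => hc2 ⟨h.1.symm, h.2⟩), if_neg hc2, mul_zero]
      · rw [if_neg (by omega : ¬ m ≤ d₀)]
        have hz : (if m = d₀ ∧ (0 : ℕ) = 0 then c else 0) = 0 := by
          rw [if_neg]; rintro ⟨h1, -⟩; omega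
        rw [hz]
        split <;> rfl
  rw [Finset.sum_congr rfl fun α _ => hterm α]
  by_cases hcond : γ ≤ β ∧ j = 0
  · rw [dif_pos hcond]
    rw [Finset.sum_eq_single_of_mem (⟨γ, by omega⟩ : Fin (β + 1)) (Finset.mem_univ _)]
    · rw [if_pos ⟨rfl, hcond.2⟩]
    · intro b _ hb
      rw [if_neg]
      rintro ⟨h1, -⟩
      exact hb (Fin.ext h1)
  · rw [dif_neg hcond]
    apply Finset.sum_eq_zero
    intro α _
    rw [if_neg]
    rintro ⟨h1, h2⟩
    exact hcond ⟨by omega, h2⟩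

end Aux
namespace Aux

lemma key (N k : ℕ) (hkN : k < N) (R₁ R₂ : Mat N)
    (hE1 : Ent N k R₁) (hE2 : Ent N k R₂) (hEd : Ent N k (R₁ - R₂))
    (hDel : ∀ γ, Del N R₁ R₂ (N - 1) γ = 0) :
    ∀ i j : Fin (N - 1), (i : ℕ) ≤ (j : ℕ) → (R₁ - R₂) i j = 0 := by
  classical
  by_contra hcon
  push_neg at hcon
  obtain ⟨i0, j0, hij0, hne0⟩ := hcon
  -- a level with a nonzero coefficient exists
  have hP : ∃ a : ℕ, ∃ i j : Fin (N - 1), (i : ℕ) ≤ (j : ℕ) ∧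
      cf a 0 ((R₁ - R₂) i j) ≠ 0 := by
    obtain ⟨c, m, heq, hcm⟩ := hEd i0 j0 hij0
    have hc : c ≠ 0 := by
      intro h; apply hne0; rw [heq, h]; simp
    refine ⟨m, i0, j0, hij0, ?_⟩
    rw [heq, cf_CXpow, if_pos ⟨rfl, rfl⟩]
    exact hc
  set d₀ := Nat.find hP with hd₀def
  have hmin : ∀ a < d₀, ∀ i j : Fin (N - 1), (i : ℕ) ≤ (j : ℕ) →
      cf a 0 ((R₁ - R₂) i j) = 0 := by
    intro a ha i j hij
    by_contra h
    exact Nat.find_min hP ha ⟨i, j, hij, h⟩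
  -- a minimal column β₀
  have hQ : ∃ b : ℕ, ∃ (hb : b < N - 1) (γ : ℕ) (hγ : γ ≤ b),
      cf d₀ 0 ((R₁ - R₂) ⟨γ, lt_of_le_of_lt hγ hb⟩ ⟨b, hb⟩) ≠ 0 := by
    obtain ⟨i, j, hij, hne⟩ := Nat.find_spec hP
    refine ⟨(j : ℕ), j.is_lt, (i : ℕ), hij, ?_⟩
    have hne' : cf d₀ 0 ((R₁ - R₂) i j) ≠ 0 := hne
    simpa using hne'
  set β₀ := Nat.find hQ with hβ₀def
  obtain ⟨hβ₀, γ₀, hγ₀, he₀⟩ := Nat.find_spec hQ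
  set e₀ := cf d₀ 0 ((R₁ - R₂) ⟨γ₀, lt_of_le_of_lt hγ₀ hβ₀⟩ ⟨β₀, hβ₀⟩) with he₀def
  -- d₀ ≥ 1
  have hd₀1 : 1 ≤ d₀ := by
    obtain ⟨c, m, heq, hcm⟩ := hEd ⟨γ₀, lt_of_le_of_lt hγ₀ hβ₀⟩ ⟨β₀, hβ₀⟩ hγ₀
    have hc : c ≠ 0 := by
      intro h
      apply he₀
      rw [he₀def, heq, h]
      simp [cf_CXpow, cf_zero]
    have hm1 : 1 ≤ m := (hcm hc).2
    have : cf d₀ 0 (C c * X 0 ^ m) ≠ 0 := by rw [← heq]; exact he₀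
    rw [cf_CXpow] at this
    by_cases hmd : m = d₀ ∧ (0 : ℕ) = 0
    · omega
    · rw [if_neg hmd] at this; exact absurd rfl this
  -- rows up to β₀ vanish at level d₀
  have claimC : ∀ β, β ≤ β₀ → ∀ γ j, cf d₀ j (Del N R₁ R₂ β γ) = 0 := by
    intro β
    induction β with
    | zero => intro _ γ j; rw [Del_zero, cf_zero]
    | succ β ihC =>
      intro hb γ j
      have hβ : β < N - 1 := by omega
      rw [claimB N k hkN R₁ R₂ hE1 hE2 hEd d₀ hmin β γ j hβ]
      have h1 : (match γ with | 0 => (0 : ℂ) | γ' + 1 => cf d₀ j (Del N R₁ R₂ β γ')) = 0 := by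
        match γ with
        | 0 => rfl
        | γ' + 1 => exact ihC (by omega) γ' j
      rw [h1]
      have h2 : (if j = 0 then 0 else (d₀ : ℂ) * cf d₀ (j - 1) (Del N R₁ R₂ β γ)) = 0 := by
        split
        · rfl
        · rw [ihC (by omega) γ (j - 1), mul_zero]
      rw [h2]
      have h3 : (if h : γ ≤ β ∧ j = 0 then
          cf d₀ 0 ((R₁ - R₂) ⟨γ, lt_of_le_of_lt h.1 hβ⟩ ⟨β, hβ⟩) else 0) = 0 := by
        split
        · next h =>
          by_contra hne
          exact Nat.find_min hQ (show β < β₀ by omega) ⟨hβ, γ, h.1, hne⟩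
        · rfl
      rw [h3]
      ring
  -- propagation above β₀
  have claimD : ∀ t, β₀ + 1 + t ≤ N - 1 →
      (∀ γ j, t < j → cf d₀ j (Del N R₁ R₂ (β₀ + 1 + t) γ) = 0) ∧
      cf d₀ t (Del N R₁ R₂ (β₀ + 1 + t) γ₀) = -e₀ * (d₀ : ℂ) ^ t := by
    intro t
    induction t with
    | zero =>
      intro _
      constructor
      · intro γ j hj
        rw [claimB N k hkN R₁ R₂ hE1 hE2 hEd d₀ hmin β₀ γ j hβ₀]
        have h1 : (match γ with | 0 => (0 : ℂ) | γ' + 1 => cf d₀ j (Del N R₁ R₂ β₀ γ')) = 0 := by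
          match γ with
          | 0 => rfl
          | γ' + 1 => exact claimC β₀ le_rfl γ' j
        rw [h1, if_neg (by omega), claimC β₀ le_rfl γ (j - 1), mul_zero,
          dif_neg (by rintro ⟨-, h⟩; omega)]
        ring
      · rw [claimB N k hkN R₁ R₂ hE1 hE2 hEd d₀ hmin β₀ γ₀ 0 hβ₀]
        have h1 : (match γ₀ with | 0 => (0 : ℂ) | γ' + 1 => cf d₀ 0 (Del N R₁ R₂ β₀ γ')) = 0 := by
          match γ₀ with
          | 0 => rfl
          | γ' + 1 => exact claimC β₀ le_rfl γ' 0
        rw [h1, if_pos rfl, dif_pos ⟨hγ₀, rfl⟩]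
        rw [← he₀def]
        ring
    | succ t iht =>
      intro hbound
      obtain ⟨ih1, ih2⟩ := iht (by omega)
      have hβt : β₀ + 1 + t < N - 1 := by omega
      have hrow : β₀ + 1 + (t + 1) = (β₀ + 1 + t) + 1 := by omega
      rw [hrow]
      constructor
      · intro γ j hj
        rw [claimB N k hkN R₁ R₂ hE1 hE2 hEd d₀ hmin (β₀ + 1 + t) γ j hβt]
        have h1 : (match γ with
            | 0 => (0 : ℂ) | γ' + 1 => cf d₀ j (Del N R₁ R₂ (β₀ + 1 + t) γ')) = 0 := by
          match γ with
          | 0 => rfl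
          | γ' + 1 => exact ih1 γ' j (by omega)
        rw [h1, if_neg (by omega), ih1 γ (j - 1) (by omega), mul_zero,
          dif_neg (by rintro ⟨-, h⟩; omega)]
        ring
      · rw [claimB N k hkN R₁ R₂ hE1 hE2 hEd d₀ hmin (β₀ + 1 + t) γ₀ (t + 1) hβt]
        have h1 : (match γ₀ with
            | 0 => (0 : ℂ) | γ' + 1 => cf d₀ (t + 1) (Del N R₁ R₂ (β₀ + 1 + t) γ')) = 0 := by
          match γ₀ with
          | 0 => rfl
          | γ' + 1 => exact ih1 γ' (t + 1) (by omega)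
        rw [h1, if_neg (by omega), Nat.add_sub_cancel, ih2,
          dif_neg (by rintro ⟨-, h⟩; omega)]
        ring
  -- endgame
  obtain ⟨-, hval⟩ := claimD (N - 1 - (β₀ + 1)) (by omega)
  rw [show β₀ + 1 + (N - 1 - (β₀ + 1)) = N - 1 from by omega, hDel, cf_zero] at hval
  have : e₀ * (d₀ : ℂ) ^ (N - 1 - (β₀ + 1)) ≠ 0 :=
    mul_ne_zero he₀ (pow_ne_zero _ (by exact_mod_cast (by omega : d₀ ≠ 0)))
  apply this
  have := hval.symm
  linear_combination -this

end Aux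
namespace Aux

lemma hD_apply (p : PQH) : hD p = X 1 * (X 0 * pderiv 0 p) := rfl

lemma pd_X1pow (γ : ℕ) : pderiv 0 (X 1 ^ γ : PQH) = 0 := by
  induction γ with
  | zero => simp
  | succ γ ih => rw [pow_succ, pderiv_mul, ih]; simp

lemma DopX0pow (a : ℕ) : X 0 * pderiv 0 (X 0 ^ a : PQH) = (a : ℂ) • X 0 ^ a := by
  cases a with
  | zero => simp
  | succ a =>
    rw [X_pow_eq_monomial, pderiv_monomial, X, monomial_mul, one_mul, smul_monomial]
    have h1 : Finsupp.single (0 : Fin 2) 1 +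
        (Finsupp.single (0 : Fin 2) (a + 1) - Finsupp.single 0 1) =
        Finsupp.single (0 : Fin 2) (a + 1) := by
      ext i; fin_cases i <;> simp [Finsupp.single_apply, Finsupp.tsub_apply] <;> omega
    rw [h1]
    congr 1
    simp [Finsupp.single_apply]

lemma hD_prod (σp : PQH) (a γ : ℕ) :
    hD (σp * X 0 ^ a * X 1 ^ γ) =
      (X 0 * X 1 * pderiv 0 σp) * X 0 ^ a * X 1 ^ γ +
      (a : ℂ) • (σp * X 0 ^ a * X 1 ^ (γ + 1)) := by
  have hd : X 0 * pderiv 0 ((X 0 : PQH) ^ a) = C ((a : ℕ) : ℂ) * X 0 ^ a := by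
    rw [DopX0pow, smul_eq_C_mul]
  rw [hD_apply, pderiv_mul, pderiv_mul, pd_X1pow, mul_zero, add_zero, smul_eq_C_mul,
    pow_succ]
  linear_combination (X 1 * X 1 ^ γ * σp) * hd

lemma Pops_step (N : ℕ) (R : Mat N) (β : ℕ) (hβ : β < N - 1) :
    Pops N R (β + 1) = hD * Pops N R β -
      ∑ α : Fin (β + 1),
        mulOp (R ⟨α, lt_of_lt_of_le α.is_lt (by omega)⟩ ⟨β, hβ⟩) * Pops N R α := by
  conv_lhs => rw [Pops.eq_def]
  show (hD * Pops N R β -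
      ∑ α : Fin (β + 1),
        (if h : (α : ℕ) < N - 1 ∧ β < N - 1 then
          mulOp (R ⟨α, h.1⟩ ⟨β, h.2⟩) * Pops N R α
        else 0)) = _
  congr 1
  apply Finset.sum_congr rfl
  intro α _
  rw [dif_pos ⟨lt_of_lt_of_le α.is_lt (by omega), hβ⟩]

lemma Pops_apply (N : ℕ) (R : Mat N) :
    ∀ β, β ≤ N - 1 → ∀ a : ℕ,
      Pops N R β (X 0 ^ a) =
        ∑ γ ∈ Finset.range (β + 1),
          ((a : ℂ)) ^ γ • (sigmaC N R β γ * X 0 ^ a * X 1 ^ γ) := by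
  intro β
  induction β using Nat.strong_induction_on with
  | _ β ih =>
    match β with
    | 0 =>
      intro _ a
      rw [Finset.sum_range_one, sigmaC_zero_zero]
      rw [show Pops N R 0 = 1 from by rw [Pops.eq_def]]
      simp
    | β + 1 =>
      intro hβ' a
      have hβ : β < N - 1 := by omega
      rw [Pops_step N R β hβ, LinearMap.sub_apply, Module.End.mul_apply, LinearMap.sum_apply,
        ih β (by omega) (by omega) a]
      have hia : ∀ α : Fin (β + 1), Pops N R (α : ℕ) (X 0 ^ a) =
          ∑ γ ∈ Finset.range (β + 1), (a : ℂ) ^ γ • (sigmaC N R α γ * X 0 ^ a * X 1 ^ γ) := by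
        intro α
        rw [ih α α.is_lt (by omega) a]
        apply Finset.sum_subset
        · intro x hx
          simp only [Finset.mem_range] at hx ⊢
          omega
        · intro γ _ hγ
          simp only [Finset.mem_range, not_lt] at hγ
          rw [sigmaC_eq_zero N R α γ (by omega)]
          simp
      have hhd : hD (∑ γ ∈ Finset.range (β + 1),
            (a : ℂ) ^ γ • (sigmaC N R β γ * X 0 ^ a * X 1 ^ γ)) =
          (∑ γ ∈ Finset.range (β + 1),
            (a : ℂ) ^ γ • ((X 0 * X 1 * pderiv 0 (sigmaC N R β γ)) * X 0 ^ a * X 1 ^ γ)) +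
          ∑ γ ∈ Finset.range (β + 1),
            (a : ℂ) ^ (γ + 1) • (sigmaC N R β γ * X 0 ^ a * X 1 ^ (γ + 1)) := by
        rw [map_sum, ← Finset.sum_add_distrib]
        apply Finset.sum_congr rfl
        intro γ _
        rw [_root_.map_smul, hD_prod, smul_add, smul_smul, ← pow_succ]
      rw [hhd]
      have hR : ∀ γ ∈ Finset.range (β + 2),
          (a : ℂ) ^ γ • (sigmaC N R (β + 1) γ * X 0 ^ a * X 1 ^ γ) =
          (a : ℂ) ^ γ • ((match γ with | 0 => (0 : PQH) | γ' + 1 => sigmaC N R β γ') * X 0 ^ a * X 1 ^ γ)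
            + (a : ℂ) ^ γ • ((X 0 * X 1 * pderiv 0 (sigmaC N R β γ)) * X 0 ^ a * X 1 ^ γ)
            - (a : ℂ) ^ γ • ((∑ α : Fin (β + 1),
                R ⟨α, lt_of_lt_of_le α.is_lt (by omega)⟩ ⟨β, hβ⟩ * sigmaC N R α γ) * X 0 ^ a * X 1 ^ γ) := by
        intro γ _
        rw [sigmaC_step N R β γ hβ, smul_eq_C_mul, smul_eq_C_mul, smul_eq_C_mul, smul_eq_C_mul]
        ring
      rw [Finset.sum_congr rfl hR]
      rw [Finset.sum_sub_distrib, Finset.sum_add_distrib]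
      have hS1 : ∑ γ ∈ Finset.range (β + 2),
          (a : ℂ) ^ γ • ((match γ with | 0 => (0 : PQH) | γ' + 1 => sigmaC N R β γ') * X 0 ^ a * X 1 ^ γ)
          = ∑ γ ∈ Finset.range (β + 1),
            (a : ℂ) ^ (γ + 1) • (sigmaC N R β γ * X 0 ^ a * X 1 ^ (γ + 1)) := by
        rw [Finset.sum_range_succ']
        simp
      have hS2 : ∑ γ ∈ Finset.range (β + 2),
          (a : ℂ) ^ γ • ((X 0 * X 1 * pderiv 0 (sigmaC N R β γ)) * X 0 ^ a * X 1 ^ γ)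
          = ∑ γ ∈ Finset.range (β + 1),
            (a : ℂ) ^ γ • ((X 0 * X 1 * pderiv 0 (sigmaC N R β γ)) * X 0 ^ a * X 1 ^ γ) := by
        rw [Finset.sum_range_succ, sigmaC_eq_zero N R β (β + 1) (by omega)]
        simp
      have hS3 : ∑ γ ∈ Finset.range (β + 2),
          (a : ℂ) ^ γ • ((∑ α : Fin (β + 1),
              R ⟨α, lt_of_lt_of_le α.is_lt (by omega)⟩ ⟨β, hβ⟩ * sigmaC N R α γ) * X 0 ^ a * X 1 ^ γ)
          = ∑ α : Fin (β + 1),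
              (mulOp (R ⟨α, lt_of_lt_of_le α.is_lt (by omega)⟩ ⟨β, hβ⟩) * Pops N R α) (X 0 ^ a) := by
        rw [Finset.sum_range_succ]
        have hlast : (∑ α : Fin (β + 1),
            R ⟨α, lt_of_lt_of_le α.is_lt (by omega)⟩ ⟨β, hβ⟩ * sigmaC N R α (β + 1)) = 0 :=
          Finset.sum_eq_zero (fun α _ => by
            rw [sigmaC_eq_zero N R α (β + 1) (by omega), mul_zero])
        rw [hlast]
        simp only [zero_mul, smul_zero, add_zero]
        have hswap : ∀ γ ∈ Finset.range (β + 1),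
            (a : ℂ) ^ γ • ((∑ α : Fin (β + 1),
              R ⟨α, lt_of_lt_of_le α.is_lt (by omega)⟩ ⟨β, hβ⟩ * sigmaC N R α γ) * X 0 ^ a * X 1 ^ γ)
            = ∑ α : Fin (β + 1),
                R ⟨α, lt_of_lt_of_le α.is_lt (by omega)⟩ ⟨β, hβ⟩ *
                  ((a : ℂ) ^ γ • (sigmaC N R α γ * X 0 ^ a * X 1 ^ γ)) := by
          intro γ _
          rw [Finset.sum_mul, Finset.sum_mul, Finset.smul_sum]
          apply Finset.sum_congr rfl
          intro α _
          rw [smul_eq_C_mul, smul_eq_C_mul]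
          ring
        rw [Finset.sum_congr rfl hswap, Finset.sum_comm]
        apply Finset.sum_congr rfl
        intro α _
        rw [Module.End.mul_apply, hia α]
        rw [show ∀ y, mulOp (R ⟨α, lt_of_lt_of_le α.is_lt (by omega)⟩ ⟨β, hβ⟩) y
            = R ⟨α, lt_of_lt_of_le α.is_lt (by omega)⟩ ⟨β, hβ⟩ * y from fun y => rfl,
          Finset.mul_sum]
      rw [hS1, hS2, hS3]
      abel

end Aux
namespace Aux

lemma Del_top (N : ℕ) (R₁ R₂ : Mat N)
    (hred : Pops N R₁ (N - 1) = Pops N R₂ (N - 1)) :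
    ∀ γ, Del N R₁ R₂ (N - 1) γ = 0 := by
  classical
  have hv : ∀ a : ℕ, ∑ γ ∈ Finset.range (N - 1 + 1),
      ((a : ℂ)) ^ γ • (Del N R₁ R₂ (N - 1) γ * X 1 ^ γ) = 0 := by
    intro a
    have h1 := Pops_apply N R₁ (N - 1) le_rfl a
    have h2 := Pops_apply N R₂ (N - 1) le_rfl a
    have h3 : ∑ γ ∈ Finset.range (N - 1 + 1),
        ((a : ℂ)) ^ γ • (sigmaC N R₁ (N - 1) γ * X 0 ^ a * X 1 ^ γ) =
        ∑ γ ∈ Finset.range (N - 1 + 1),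
        ((a : ℂ)) ^ γ • (sigmaC N R₂ (N - 1) γ * X 0 ^ a * X 1 ^ γ) := by
      rw [← h1, ← h2, hred]
    have h4 : (∑ γ ∈ Finset.range (N - 1 + 1),
        ((a : ℂ)) ^ γ • (Del N R₁ R₂ (N - 1) γ * X 1 ^ γ)) * X 0 ^ a = 0 := by
      rw [Finset.sum_mul]
      have hterm : ∀ γ ∈ Finset.range (N - 1 + 1),
          ((a : ℂ)) ^ γ • (Del N R₁ R₂ (N - 1) γ * X 1 ^ γ) * X 0 ^ a =
          ((a : ℂ)) ^ γ • (sigmaC N R₁ (N - 1) γ * X 0 ^ a * X 1 ^ γ) -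
          ((a : ℂ)) ^ γ • (sigmaC N R₂ (N - 1) γ * X 0 ^ a * X 1 ^ γ) := by
        intro γ _
        unfold Del
        rw [smul_eq_C_mul, smul_eq_C_mul, smul_eq_C_mul]
        ring
      rw [Finset.sum_congr rfl hterm, Finset.sum_sub_distrib, h3, sub_self]
    rcases mul_eq_zero.mp h4 with h | h
    · exact h
    · exact absurd h (pow_ne_zero _ (MvPolynomial.X_ne_zero 0))
  intro γ
  by_cases hγ : γ < N - 1 + 1
  · set p : Polynomial PQH := ∑ γ ∈ Finset.range (N - 1 + 1),
      Polynomial.monomial γ (Del N R₁ R₂ (N - 1) γ * X 1 ^ γ) with hp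
    have hroot : ∀ a : ℕ, p.IsRoot ((C ((a : ℂ)) : PQH)) := by
      intro a
      have heval : p.eval ((C ((a : ℂ)) : PQH)) = ∑ γ ∈ Finset.range (N - 1 + 1),
          ((a : ℂ)) ^ γ • (Del N R₁ R₂ (N - 1) γ * X 1 ^ γ) := by
        rw [hp, Polynomial.eval_finset_sum]
        apply Finset.sum_congr rfl
        intro γ _
        rw [Polynomial.eval_monomial, smul_eq_C_mul, map_pow]
        ring
      show p.eval _ = 0
      rw [heval, hv a]
    have hinj : Function.Injective (fun a : ℕ => ((C ((a : ℂ)) : PQH))) := by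
      intro a b hab
      have := MvPolynomial.C_injective (Fin 2) ℂ hab
      exact_mod_cast this
    have hinf : {x : PQH | p.IsRoot x}.Infinite := by
      apply Set.Infinite.mono ?_ (Set.infinite_range_of_injective hinj)
      rintro _ ⟨a, rfl⟩
      exact hroot a
    have hp0 : p = 0 := p.eq_zero_of_infinite_isRoot hinf
    have hc := congrArg (fun q => Polynomial.coeff q γ) hp0
    rw [hp] at hc
    simp only [Polynomial.finset_sum_coeff, Polynomial.coeff_monomial,
      Polynomial.coeff_zero] at hc
    rw [Finset.sum_ite_eq' (Finset.range (N - 1 + 1)) γ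
      (fun γ => Del N R₁ R₂ (N - 1) γ * X 1 ^ γ), if_pos (Finset.mem_range.mpr hγ)] at hc
    rcases mul_eq_zero.mp hc with h | h
    · exact h
    · exact absurd h (pow_ne_zero _ (MvPolynomial.X_ne_zero 1))
  · unfold Del
    rw [sigmaC_eq_zero N R₁ (N - 1) γ (by omega), sigmaC_eq_zero N R₂ (N - 1) γ (by omega),
      sub_self]

end Aux
/-- **`h⁻¹`-linear adapted families are determined by their reduced operator.**
If `Ω₁` and `Ω₂` are adapted families of connection 1-forms, both `h⁻¹`-linear,
with the same reduced operator, then `Ω₁ = Ω₂`. -/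
theorem hinv_linear_adapted_determined_by_reduced_operator
    (N k : ℕ) (hk : 2 ≤ k) (hNk : k < N)
    (R₁ R₂ : Mat N)
    (h₁ : IsAdaptedConn N k R₁) (h₂ : IsAdaptedConn N k R₂)
    (hl₁ : IsHinvLinear N R₁) (hl₂ : IsHinvLinear N R₂)
    (hred : Pops N R₁ (N - 1) = Pops N R₂ (N - 1)) :
    R₁ = R₂ := by
  have hE1 := Aux.ent_of N k hNk R₁ h₁ hl₁
  have hE2 := Aux.ent_of N k hNk R₂ h₂ hl₂
  have hEd := Aux.ent_sub N k hNk R₁ R₂ h₁ h₂ hl₁ hl₂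
  have hDel := Aux.Del_top N R₁ R₂ hred
  have hkey := Aux.key N k hNk R₁ R₂ hE1 hE2 hEd hDel
  apply Matrix.ext
  intro i j
  rcases lt_trichotomy ((i : ℕ)) ((j : ℕ) + 1) with h | h | h
  · have hij : (i : ℕ) ≤ (j : ℕ) := by omega
    have := hkey i j hij
    rw [Matrix.sub_apply] at this
    exact sub_eq_zero.mp this
  · rw [h₁.subdiag i j h, h₂.subdiag i j h]
  · have hd : 2 * ((j : ℤ) - (i : ℤ)) + 2 < 0 := by
      have : ((j : ℕ) : ℤ) + 1 < ((i : ℕ) : ℤ) := by exact_mod_cast h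
      omega
    rw [Aux.homog_neg_zero N k hNk _ _ hd (h₁.homog i j),
        Aux.homog_neg_zero N k hNk _ _ hd (h₂.homog i j)]

end
end

section
/- There is at most one adapted family of connection 1-forms which is h⁻¹-linear and whose reduced operator equals the Picard–Fuchs operator P^{N,k}: if Ω₁ and Ω₂ are adapted families of connection 1-forms, both h⁻¹-linear, and the reduced operator of each equals P^{N,k}, then Ω₁ = Ω₂. -/
open MvPolynomial Matrix Finset

noncomputable section

/-! ### Auxiliary lemmas -/

section Aux

lemma mulOp_apply (c f : PQH) : mulOp c f = c * f := rfl

lemma mulOp_one' : mulOp (1 : PQH) = 1 := by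
  refine LinearMap.ext fun f => ?_; show (1 : PQH) * f = f; exact one_mul f

lemma mulOp_add (a b : PQH) : mulOp (a + b) = mulOp a + mulOp b := by
  refine LinearMap.ext fun f => ?_
  show (a + b) * f = a * f + b * f
  ring

lemma mulOp_sub (a b : PQH) : mulOp (a - b) = mulOp a - mulOp b := by
  refine LinearMap.ext fun f => ?_
  show (a - b) * f = a * f - b * f
  ring

lemma mulOp_mul (a b : PQH) : mulOp (a * b) = mulOp a * mulOp b := by
  refine LinearMap.ext fun f => ?_
  show (a * b) * f = a * (b * f)
  ring

lemma mulOp_zero : mulOp (0 : PQH) = 0 := by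
  refine LinearMap.ext fun f => ?_; show (0 : PQH) * f = 0; exact zero_mul f

lemma hD_apply (f : PQH) : hD f = X 1 * (X 0 * pderiv 0 f) := rfl

lemma hD_mulOp (c : PQH) :
    hD * mulOp c = mulOp c * hD + mulOp (X 0 * X 1 * pderiv 0 c) := by
  refine LinearMap.ext fun f => ?_
  simp only [Module.End.mul_apply, LinearMap.add_apply, hD_apply, mulOp_apply, pderiv_mul]
  ring

lemma q_pderiv_q_pow (a : ℕ) :
    (X 0 : PQH) * pderiv 0 ((X 0 : PQH) ^ a) = (a : ℂ) • (X 0 : PQH) ^ a := by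
  induction a with
  | zero => simp
  | succ a ih =>
      rw [pow_succ, pderiv_mul, pderiv_X_self]
      push_cast
      rw [add_smul, one_smul]
      calc (X 0 : PQH) * (pderiv 0 ((X 0:PQH) ^ a) * X 0 + X 0 ^ a * 1)
          = ((X 0 : PQH) * pderiv 0 ((X 0:PQH) ^ a)) * X 0 + X 0 ^ a * X 0 := by ring
        _ = ((a : ℂ) • (X 0 : PQH) ^ a) * X 0 + X 0 ^ a * X 0 := by rw [ih]
        _ = (a : ℂ) • ((X 0:PQH) ^ a * X 0) + X 0 ^ a * X 0 := by rw [smul_mul_assoc]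

lemma hD_pow_q (γ a : ℕ) :
    (hD ^ γ) ((X 0 : PQH) ^ a) = ((a : ℂ) ^ γ) • ((X 1 : PQH) ^ γ * X 0 ^ a) := by
  induction γ with
  | zero => simp
  | succ γ ih =>
      rw [pow_succ', Module.End.mul_apply, ih, _root_.map_smul, hD_apply]
      rw [pderiv_mul]
      have h1 : pderiv 0 ((X 1 : PQH) ^ γ) = 0 := by
        rw [pderiv_pow]; simp [pderiv_X_of_ne (show (1 : Fin 2) ≠ 0 by decide)]
      rw [h1]
      rw [show (X 1 : PQH) * (X 0 * (0 * X 0 ^ a + X 1 ^ γ * pderiv 0 (X 0 ^ a)))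
          = (X 1 * X 1 ^ γ) * ((X 0:PQH) * pderiv 0 (X 0 ^ a)) by ring]
      rw [q_pderiv_q_pow, pow_succ]
      rw [mul_smul_comm]
      rw [smul_smul]
      ring_nf

end Aux

section Extraction

lemma pqh_natCast (a : ℕ) : ((a : ℕ) : PQH) = MvPolynomial.C ((a : ℕ) : ℂ) := by
  simp

lemma extraction (M : ℕ) (c : ℕ → PQH)
    (h : ∑ γ ∈ Finset.range M, mulOp (c γ) * hD ^ γ = 0) :
    ∀ γ < M, c γ = 0 := by
  -- evaluate at powers of q
  have key : ∀ a : ℕ, ∑ γ ∈ Finset.range M, ((a : PQH) ^ γ) * (c γ * X 1 ^ γ) = 0 := by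
    intro a
    have h0 := congrArg (fun (T : Module.End ℂ PQH) => T ((X 0 : PQH) ^ a)) h
    simp only [LinearMap.zero_apply] at h0
    rw [LinearMap.coe_sum, Finset.sum_apply] at h0
    have h1 : ∀ γ ∈ Finset.range M,
        (mulOp (c γ) * hD ^ γ) ((X 0 : PQH) ^ a)
          = (((a:PQH) ^ γ) * (c γ * X 1 ^ γ)) * X 0 ^ a := by
      intro γ _
      rw [Module.End.mul_apply, hD_pow_q, mulOp_apply]
      rw [pqh_natCast, ← map_pow, mul_smul_comm, MvPolynomial.smul_eq_C_mul]
      ring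
    rw [Finset.sum_congr rfl h1, ← Finset.sum_mul] at h0
    exact (mul_eq_zero.mp h0).resolve_right (pow_ne_zero _ (MvPolynomial.X_ne_zero _))
  -- build the polynomial over PQH with these roots
  set F : Polynomial PQH :=
    ∑ γ ∈ Finset.range M, Polynomial.C (c γ * X 1 ^ γ) * Polynomial.X ^ γ with hF
  have hroot : ∀ a : ℕ, F.IsRoot ((a : ℕ) : PQH) := by
    intro a
    have : F.eval ((a:ℕ) : PQH)
        = ∑ γ ∈ Finset.range M, ((a : PQH) ^ γ) * (c γ * X 1 ^ γ) := by
      rw [hF, Polynomial.eval_finset_sum]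
      refine Finset.sum_congr rfl fun γ _ => ?_
      rw [Polynomial.eval_mul, Polynomial.eval_C, Polynomial.eval_pow, Polynomial.eval_X]
      ring
    rw [Polynomial.IsRoot, this, key a]
  have hFz : F = 0 := by
    apply Polynomial.eq_zero_of_infinite_isRoot
    exact Set.infinite_of_injective_forall_mem
      (f := fun a : ℕ => ((a : ℕ) : PQH))
      (fun a b hab => Nat.cast_injective hab) (fun a => hroot a)
  intro γ hγ
  have hc : F.coeff γ = c γ * X 1 ^ γ := by
    rw [hF, Polynomial.finset_sum_coeff]
    rw [Finset.sum_congr rfl (fun δ _ => by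
      rw [Polynomial.coeff_C_mul, Polynomial.coeff_X_pow])]
    simp only [mul_ite, mul_one, mul_zero]
    rw [Finset.sum_ite_eq (Finset.range M) γ (fun δ => c δ * X 1 ^ δ)]
    simp [hγ]
  rw [hFz] at hc
  simp only [Polynomial.coeff_zero] at hc
  exact (mul_eq_zero.mp hc.symm).resolve_right (pow_ne_zero _ (MvPolynomial.X_ne_zero _))

end Extraction

section Sigma

variable (N : ℕ) (R : Mat N)

lemma mulOp_sum {ι : Type*} (s : Finset ι) (f : ι → PQH) :
    mulOp (∑ i ∈ s, f i) = ∑ i ∈ s, mulOp (f i) := by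
  classical
  induction s using Finset.induction_on with
  | empty => simpa using mulOp_zero
  | insert _ _ h ih => rw [Finset.sum_insert h, Finset.sum_insert h, mulOp_add, ih]

lemma sigma_hi : ∀ β γ : ℕ, β < γ → sigmaC N R β γ = 0 := by
  intro β
  induction β with
  | zero =>
      intro γ h
      obtain ⟨γ', rfl⟩ : ∃ γ', γ = γ' + 1 := ⟨γ - 1, by omega⟩
      rw [sigmaC]
  | succ β ih =>
      intro γ h
      obtain ⟨γ', rfl⟩ : ∃ γ', γ = γ' + 1 := ⟨γ - 1, by omega⟩
      rw [sigmaC, ih γ' (by omega), ih (γ' + 1) (by omega)]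
      rw [Finset.sum_eq_zero (fun α _ => by
        rw [dif_neg]
        rintro ⟨h1, -⟩
        have := α.is_lt
        omega)]
      simp

lemma sigma_diag : ∀ β : ℕ, sigmaC N R β β = 1 := by
  intro β
  induction β with
  | zero => rw [sigmaC]
  | succ β ih =>
      rw [sigmaC, ih]
      simp only [Nat.succ_eq_add_one]
      rw [sigma_hi N R β (β + 1) (lt_add_one β)]
      rw [Finset.sum_eq_zero (fun α _ => by
        rw [dif_neg]
        rintro ⟨h1, -⟩
        have := α.is_lt
        omega)]
      simp

/-- the first summand in the `sigmaC` recursion. -/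
def sigM (β : ℕ) : ℕ → PQH
  | 0 => 0
  | γ' + 1 => sigmaC N R β γ'

lemma sigma_succ (β γ : ℕ) :
    sigmaC N R (β + 1) γ =
      sigM N R β γ + X 0 * X 1 * pderiv 0 (sigmaC N R β γ) -
      ∑ α : Fin (β + 1),
        (if h : γ ≤ (α : ℕ) ∧ (α : ℕ) < N - 1 ∧ β < N - 1 then
          R ⟨α, h.2.1⟩ ⟨β, h.2.2⟩ * sigmaC N R α γ
        else 0) := by
  cases γ with
  | zero => rw [sigmaC]; rfl
  | succ γ' => rw [sigmaC]; rfl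

lemma Pops_eq : ∀ β, β ≤ N - 1 →
    Pops N R β = ∑ γ ∈ Finset.range (β + 1), mulOp (sigmaC N R β γ) * hD ^ γ := by
  intro β
  induction β using Nat.strong_induction_on with
  | _ β ih =>
    match β with
    | 0 =>
        intro _
        rw [Pops]
        rw [Finset.sum_range_one, show sigmaC N R 0 0 = 1 from by rw [sigmaC]]
        simp [mulOp_one']
    | β + 1 =>
        intro hβ
        have hβN : β < N - 1 := by omega
        have hle : β + 1 ≤ N - 1 := hβ
        have e : Fin (β + 1) → Fin (N - 1) := fun α => ⟨α, lt_of_lt_of_le α.is_lt hle⟩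
        rw [Pops]
        -- rewrite subtracted sum
        have step1 : ∀ α : Fin (β + 1),
            (if h : (α : ℕ) < N - 1 ∧ β < N - 1 then
              mulOp (R ⟨α, h.1⟩ ⟨β, h.2⟩) * Pops N R α else 0)
            = ∑ γ ∈ Finset.range (β + 2),
                mulOp (R ⟨α, lt_of_lt_of_le α.is_lt hle⟩ ⟨β, hβN⟩ * sigmaC N R α γ) * hD ^ γ := by
          intro α
          rw [dif_pos ⟨lt_of_lt_of_le α.is_lt hle, hβN⟩]
          rw [ih α α.is_lt (by omega)]
          have hsub : ∑ γ ∈ Finset.range ((α : ℕ) + 1), mulOp (sigmaC N R α γ) * hD ^ γ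
              = ∑ γ ∈ Finset.range (β + 2), mulOp (sigmaC N R α γ) * hD ^ γ := by
            refine Finset.sum_subset ?_ ?_
            · intro x hx
              simp only [Finset.mem_range] at hx ⊢
              have := α.is_lt
              omega
            · intro γ _ hγ
              simp only [Finset.mem_range, not_lt] at hγ
              rw [sigma_hi N R α γ (by omega), mulOp_zero, zero_mul]
          rw [hsub, Finset.mul_sum]
          refine Finset.sum_congr rfl fun γ _ => ?_
          rw [mulOp_mul, mul_assoc]
        rw [Finset.sum_congr rfl fun α _ => step1 α]
        rw [Finset.sum_comm]
        -- now LHS = hD * (sum) - ∑γ ∑α ...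
        rw [ih β (lt_add_one β) (by omega), Finset.mul_sum]
        have step2 : ∀ γ, hD * (mulOp (sigmaC N R β γ) * hD ^ γ)
            = mulOp (sigmaC N R β γ) * hD ^ (γ + 1)
              + mulOp (X 0 * X 1 * pderiv 0 (sigmaC N R β γ)) * hD ^ γ := by
          intro γ
          rw [← mul_assoc, hD_mulOp, add_mul, mul_assoc, ← pow_succ']
        rw [Finset.sum_congr rfl fun γ _ => step2 γ, Finset.sum_add_distrib]
        -- rewrite RHS
        have step3 : ∀ γ ∈ Finset.range (β + 2),
            mulOp (sigmaC N R (β + 1) γ) * hD ^ γ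
            = (mulOp (sigM N R β γ) * hD ^ γ
                + mulOp (X 0 * X 1 * pderiv 0 (sigmaC N R β γ)) * hD ^ γ)
              - mulOp (∑ α : Fin (β + 1),
                  R ⟨α, lt_of_lt_of_le α.is_lt hle⟩ ⟨β, hβN⟩ * sigmaC N R α γ) * hD ^ γ := by
          intro γ _
          have hSe : (∑ α : Fin (β + 1),
              (if h : γ ≤ (α : ℕ) ∧ (α : ℕ) < N - 1 ∧ β < N - 1 then
                R ⟨α, h.2.1⟩ ⟨β, h.2.2⟩ * sigmaC N R α γ else 0))
              = ∑ α : Fin (β + 1),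
                  R ⟨α, lt_of_lt_of_le α.is_lt hle⟩ ⟨β, hβN⟩ * sigmaC N R α γ := by
            refine Finset.sum_congr rfl fun α _ => ?_
            by_cases hγα : γ ≤ (α : ℕ)
            · rw [dif_pos ⟨hγα, lt_of_lt_of_le α.is_lt hle, hβN⟩]
            · rw [dif_neg (fun hc => hγα hc.1),
                sigma_hi N R α γ (by omega), mul_zero]
          rw [sigma_succ, hSe, mulOp_sub, mulOp_add, sub_mul, add_mul]
        rw [Finset.sum_congr rfl step3, Finset.sum_sub_distrib, Finset.sum_add_distrib]
        -- compare the three pieces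
        have piece1 : ∑ γ ∈ Finset.range (β + 2), mulOp (sigM N R β γ) * hD ^ γ
            = ∑ γ ∈ Finset.range (β + 1), mulOp (sigmaC N R β γ) * hD ^ (γ + 1) := by
          rw [Finset.sum_range_succ' (fun γ => mulOp (sigM N R β γ) * hD ^ γ) (β + 1)]
          have : mulOp (sigM N R β 0) * hD ^ 0 = 0 := by
            show mulOp 0 * hD ^ 0 = 0
            rw [mulOp_zero, zero_mul]
          rw [this, add_zero]
          rfl
        have piece2 : ∑ γ ∈ Finset.range (β + 2),
              mulOp (X 0 * X 1 * pderiv 0 (sigmaC N R β γ)) * hD ^ γ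
            = ∑ γ ∈ Finset.range (β + 1),
              mulOp (X 0 * X 1 * pderiv 0 (sigmaC N R β γ)) * hD ^ γ := by
          rw [Finset.sum_range_succ]
          rw [sigma_hi N R β (β + 1) (lt_add_one β)]
          simp [mulOp_zero]
        have piece3 : ∀ γ ∈ Finset.range (β + 2),
            (∑ α : Fin (β + 1), mulOp (R ⟨α, lt_of_lt_of_le α.is_lt hle⟩ ⟨β, hβN⟩
              * sigmaC N R α γ) * hD ^ γ)
            = mulOp (∑ α : Fin (β + 1),
                R ⟨α, lt_of_lt_of_le α.is_lt hle⟩ ⟨β, hβN⟩ * sigmaC N R α γ) * hD ^ γ := by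
          intro γ _
          rw [mulOp_sum, Finset.sum_mul]
        rw [Finset.sum_congr rfl piece3]
        rw [piece1, piece2]

end Sigma

section PhiSection

lemma fin2_cases : ∀ n : Fin 2, n = 0 ∨ n = 1 := by decide

/-- the separating map `ℂ[q,h] → (ℂ[q])[h]`: outer variable is `h`. -/
def Phi : PQH →ₐ[ℂ] Polynomial (Polynomial ℂ) :=
  aeval ![Polynomial.C Polynomial.X, Polynomial.X]

lemma Phi_X0 : Phi (X 0) = Polynomial.C Polynomial.X := by
  simp [Phi]

lemma Phi_X1 : Phi (X 1) = Polynomial.X := by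
  simp [Phi]

lemma Phi_C (c : ℂ) : Phi (C c) = Polynomial.C (Polynomial.C c) := by
  simp [Phi, algebraMap_eq]

lemma Phi_monomial (u : Fin 2 →₀ ℕ) (c : ℂ) :
    Phi (monomial u c)
      = Polynomial.C (Polynomial.C c * Polynomial.X ^ (u 0)) * Polynomial.X ^ (u 1) := by
  rw [monomial_eq]
  rw [Finsupp.prod_fintype _ _ (fun i => pow_zero _), Fin.prod_univ_two]
  simp only [_root_.map_mul, _root_.map_pow, Phi_C, Phi_X0, Phi_X1]
  ring

/-- the left inverse of `Phi`. -/
def Psi : Polynomial (Polynomial ℂ) →+* PQH :=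
  Polynomial.eval₂RingHom
    (Polynomial.eval₂RingHom (algebraMap ℂ PQH) (X 0)) (X 1)

lemma Psi_Phi (p : PQH) : Psi (Phi p) = p := by
  induction p using MvPolynomial.induction_on with
  | C a =>
      rw [Phi_C]
      simp [Psi, algebraMap_eq]
  | add p q hp hq => rw [_root_.map_add, _root_.map_add, hp, hq]
  | mul_X p n hp =>
      rw [_root_.map_mul, _root_.map_mul, hp]
      congr 1
      rcases fin2_cases n with rfl | rfl
      · rw [Phi_X0]; simp [Psi]
      · rw [Phi_X1]; simp [Psi]

lemma Phi_injective : Function.Injective Phi := by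
  intro a b hab
  rw [← Psi_Phi a, ← Psi_Phi b, hab]

/-- transport of the derivative `∂/∂q` through `Phi`. -/
lemma Phi_pderiv (p : PQH) : ∀ m : ℕ,
    (Phi (pderiv 0 p)).coeff m = Polynomial.derivative ((Phi p).coeff m) := by
  induction p using MvPolynomial.induction_on with
  | C a =>
      intro m
      rw [pderiv_C, map_zero, Polynomial.coeff_zero, Phi_C]
      rcases Nat.eq_zero_or_pos m with rfl | hm
      · rw [Polynomial.coeff_C_zero, Polynomial.derivative_C]
      · rw [Polynomial.coeff_C, if_neg (by omega), Polynomial.derivative_zero]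
  | add p q hp hq =>
      intro m
      simp only [_root_.map_add, Polynomial.coeff_add, hp m, hq m,
        Polynomial.derivative_add]
  | mul_X p n hp =>
      intro m
      rcases fin2_cases n with rfl | rfl
      · rw [pderiv_mul, pderiv_X_self, mul_one, _root_.map_add, _root_.map_mul, Phi_X0,
          _root_.map_mul, Phi_X0]
        rw [Polynomial.coeff_add, Polynomial.coeff_mul_C, Polynomial.coeff_mul_C]
        rw [hp m, Polynomial.derivative_mul, Polynomial.derivative_X]
        ring
      · rw [pderiv_mul, pderiv_X_of_ne (show (1 : Fin 2) ≠ 0 by decide), mul_zero, add_zero, _root_.map_mul, Phi_X1, _root_.map_mul, Phi_X1]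
        cases m with
        | zero =>
            rw [Polynomial.coeff_mul_X_zero, Polynomial.coeff_mul_X_zero,
              Polynomial.derivative_zero]
        | succ m' =>
            rw [Polynomial.coeff_mul_X, Polynomial.coeff_mul_X, hp m']

/-- `h`-free polynomials become outer constants under `Phi`. -/
lemma Phi_hfree (p : PQH) (hp : ∀ u ∈ p.support, u 1 = 0) :
    ∃ g : Polynomial ℂ, Phi p = Polynomial.C g := by
  classical
  refine ⟨∑ u ∈ p.support, Polynomial.C (coeff u p) * Polynomial.X ^ (u 0), ?_⟩
  conv_lhs => rw [p.as_sum]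
  rw [map_sum, map_sum]
  refine Finset.sum_congr rfl fun u hu => ?_
  rw [Phi_monomial, hp u hu, pow_zero, mul_one, _root_.map_mul, _root_.map_pow]

end PhiSection

section WEq

lemma below_zero {N k : ℕ} (hk : k ≤ N) {R : Mat N} (h : IsAdaptedConn N k R)
    (i j : Fin (N - 1)) (hij : (j : ℕ) + 1 < (i : ℕ)) : R i j = 0 := by
  by_contra hne
  obtain ⟨u, hu⟩ := MvPolynomial.ne_zero_iff.mp hne
  have hd := h.homog i j hu
  have hnonneg : (0 : ℤ) ≤ Finsupp.weight (wt N k) u := by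
    rw [Finsupp.weight_apply]
    refine Finset.sum_nonneg fun x _ => ?_
    refine nsmul_nonneg ?_ (u x)
    rcases fin2_cases x with rfl | rfl
    · show (0:ℤ) ≤ 2 * ((N : ℤ) - (k : ℤ))
      have : (k : ℤ) ≤ N := by exact_mod_cast hk
      omega
    · show (0:ℤ) ≤ 2
      omega
  rw [hd] at hnonneg
  have h1 : (j : ℤ) + 1 < (i : ℤ) := by exact_mod_cast hij
  omega

variable (N : ℕ) (R : Mat N)

/-- the (transposed) matrix of coefficients of the operators `P_β`. -/
def Wmat : Mat N := fun γ β => sigmaC N R (β : ℕ) (γ : ℕ)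

/-- the correction matrix supported in the last column. -/
def Pcol : Mat N := fun γ β =>
  if (β : ℕ) = N - 2 then sigmaC N R (N - 1) (γ : ℕ) else 0

lemma Im1_mul_entry (γ β : Fin (N - 1)) :
    (Im1 N * Wmat N R) γ β = sigM N R (β : ℕ) (γ : ℕ) := by
  rw [Matrix.mul_apply]
  rcases hγ : (γ : ℕ) with _ | g
  · rw [Finset.sum_eq_zero (fun δ _ => by
      rw [show Im1 N γ δ = 0 from if_neg (by omega), zero_mul])]
    rfl
  · have hg : g < N - 1 := by have := γ.is_lt; omega
    rw [Finset.sum_eq_single (⟨g, hg⟩ : Fin (N - 1))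
      (fun δ _ hδ => by
        rw [show Im1 N γ δ = 0 from
          if_neg (fun hc => hδ (Fin.ext (show (δ:ℕ) = g by omega))), zero_mul])
      (fun hmem => absurd (Finset.mem_univ _) hmem)]
    rw [show Im1 N γ ⟨g, hg⟩ = 1 from if_pos (show (γ:ℕ) = g + 1 by omega), one_mul]
    rfl

lemma Weq {k : ℕ} (hk : k ≤ N) (h : IsAdaptedConn N k R) :
    Wmat N R * R
      = Im1 N * Wmat N R + (X 0 * X 1 : PQH) • (Wmat N R).map (fun p => pderiv 0 p)
        - Pcol N R := by
  apply Matrix.ext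
  intro γ β
  have hb : (β : ℕ) < N - 1 := β.is_lt
  rw [Matrix.sub_apply, Matrix.add_apply, Im1_mul_entry, Matrix.smul_apply,
    Matrix.map_apply, smul_eq_mul]
  rw [Matrix.mul_apply]
  set f : ℕ → PQH :=
    fun d => if hd : d < N - 1 then sigmaC N R d (γ:ℕ) * R ⟨d, hd⟩ β else 0 with hf
  have lhs1 : ∀ δ : Fin (N - 1), Wmat N R γ δ * R δ β = f (δ:ℕ) := by
    intro δ
    rw [hf]
    simp only [dif_pos δ.is_lt, Fin.eta]
    rfl
  rw [Finset.sum_congr rfl fun δ _ => lhs1 δ, Fin.sum_univ_eq_sum_range]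
  have hsplit : ∑ d ∈ Finset.range (N - 1), f d
      = (∑ d ∈ Finset.range ((β:ℕ) + 1), f d)
        + ∑ d ∈ Finset.Ico ((β:ℕ) + 1) (N - 1), f d := by
    exact (Finset.sum_range_add_sum_Ico f (by omega)).symm
  rw [hsplit]
  have head : ∑ d ∈ Finset.range ((β:ℕ) + 1), f d
      = sigM N R (β:ℕ) (γ:ℕ) + X 0 * X 1 * pderiv 0 (sigmaC N R (β:ℕ) (γ:ℕ))
        - sigmaC N R ((β:ℕ) + 1) (γ:ℕ) := by
    rw [← Fin.sum_univ_eq_sum_range f ((β:ℕ) + 1)]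
    have hterm : ∀ α : Fin ((β:ℕ) + 1),
        f (α : ℕ)
        = (if h' : (γ:ℕ) ≤ (α : ℕ) ∧ (α : ℕ) < N - 1 ∧ (β:ℕ) < N - 1 then
            R ⟨(α:ℕ), h'.2.1⟩ ⟨(β:ℕ), h'.2.2⟩ * sigmaC N R (α:ℕ) (γ:ℕ)
          else 0) := by
      intro α
      have hα : (α : ℕ) < N - 1 := by have := α.is_lt; omega
      rw [hf]
      simp only [dif_pos hα]
      by_cases hγα : (γ:ℕ) ≤ (α:ℕ)
      · rw [dif_pos ⟨hγα, hα, hb⟩]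
        exact mul_comm _ _
      · rw [dif_neg (fun hc => hγα hc.1), sigma_hi N R (α:ℕ) (γ:ℕ) (by omega), zero_mul]
    rw [Finset.sum_congr rfl fun α _ => hterm α]
    rw [sigma_succ N R (β:ℕ) (γ:ℕ)]
    ring
  rw [head]
  have tail : ∑ d ∈ Finset.Ico ((β:ℕ) + 1) (N - 1), f d
      = sigmaC N R ((β:ℕ) + 1) (γ:ℕ)
        - (if (β : ℕ) = N - 2 then sigmaC N R (N - 1) (γ:ℕ) else 0) := by
    by_cases hc : (β:ℕ) + 1 < N - 1
    · have hmem : (β:ℕ) + 1 ∈ Finset.Ico ((β:ℕ) + 1) (N - 1) := by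
        rw [Finset.mem_Ico]; omega
      rw [Finset.sum_eq_single_of_mem _ hmem]
      · rw [hf]
        simp only [dif_pos hc]
        rw [h.subdiag ⟨(β:ℕ)+1, hc⟩ β rfl, mul_one, if_neg (by omega), sub_zero]
      · intro d hd hne
        rw [Finset.mem_Ico] at hd
        have hdlt : d < N - 1 := hd.2
        rw [hf]
        simp only [dif_pos hdlt]
        rw [below_zero hk h ⟨d, hdlt⟩ β (by simp only []; omega), mul_zero]
    · have hN2 : (β:ℕ) + 1 = N - 1 := by omega
      rw [Finset.Ico_eq_empty (by omega), Finset.sum_empty, hN2,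
        if_pos (by omega), sub_self]
  rw [tail]
  show sigM N R (β:ℕ) (γ:ℕ) + X 0 * X 1 * pderiv 0 (sigmaC N R (β:ℕ) (γ:ℕ))
        - sigmaC N R ((β:ℕ) + 1) (γ:ℕ)
      + (sigmaC N R ((β:ℕ) + 1) (γ:ℕ)
        - (if (β : ℕ) = N - 2 then sigmaC N R (N - 1) (γ:ℕ) else 0))
    = sigM N R (β:ℕ) (γ:ℕ) + X 0 * X 1 * pderiv 0 (sigmaC N R (β:ℕ) (γ:ℕ))
      - (if (β : ℕ) = N - 2 then sigmaC N R (N - 1) (γ:ℕ) else 0)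
  ring
end WEq

section Gauge

lemma tri_mul_diag {n : ℕ} {A B : Matrix (Fin n) (Fin n) PQH}
    (hA : A.BlockTriangular id) (hB : B.BlockTriangular id) (i : Fin n) :
    (A * B) i i = A i i * B i i := by
  rw [Matrix.mul_apply]
  rw [Finset.sum_eq_single i (fun δ _ hδ => ?_) (fun h => absurd (Finset.mem_univ _) h)]
  rcases lt_trichotomy δ i with hlt | heq | hgt
  · rw [hA hlt, zero_mul]
  · exact absurd heq hδ
  · rw [hB hgt, mul_zero]

variable (N : ℕ) (R : Mat N)

lemma Wmat_triangular : (Wmat N R).BlockTriangular id := by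
  intro γ β h
  exact sigma_hi N R (β : ℕ) (γ : ℕ) h

lemma Wmat_diag (γ : Fin (N - 1)) : Wmat N R γ γ = 1 := sigma_diag N R (γ : ℕ)

lemma Wmat_isUnit_det : IsUnit (Wmat N R).det := by
  rw [Matrix.det_of_upperTriangular (Wmat_triangular N R)]
  rw [Finset.prod_eq_one fun γ _ => Wmat_diag N R γ]
  exact isUnit_one

lemma Winv_triangular : (Wmat N R)⁻¹.BlockTriangular id := by
  have : Invertible (Wmat N R) := (Wmat N R).invertibleOfIsUnitDet (Wmat_isUnit_det N R)
  exact Matrix.blockTriangular_inv_of_blockTriangular (Wmat_triangular N R)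

lemma Winv_diag (γ : Fin (N - 1)) : (Wmat N R)⁻¹ γ γ = 1 := by
  have h1 := Matrix.mul_nonsing_inv (Wmat N R) (Wmat_isUnit_det N R)
  have h2 := congrFun (congrFun h1 γ) γ
  rw [tri_mul_diag (Wmat_triangular N R) (Winv_triangular N R), Wmat_diag,
    one_mul] at h2
  rw [h2]
  simp [Matrix.one_apply]

lemma mderiv_mul {n : ℕ} (A B : Matrix (Fin n) (Fin n) PQH) :
    (A * B).map (fun p => pderiv 0 p)
      = (A.map fun p => pderiv 0 p) * B + A * (B.map fun p => pderiv 0 p) := by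
  apply Matrix.ext
  intro i j
  rw [Matrix.add_apply, Matrix.map_apply, Matrix.mul_apply, Matrix.mul_apply,
    Matrix.mul_apply, map_sum, ← Finset.sum_add_distrib]
  refine Finset.sum_congr rfl fun δ _ => ?_
  rw [pderiv_mul, Matrix.map_apply, Matrix.map_apply]

lemma Pcol_mul {n : ℕ} (hN : 3 ≤ n) {U : Mat n}
    (hU : U.BlockTriangular id) (hdiag : ∀ γ, U γ γ = 1) (R' : Mat n) :
    Pcol n R' * U = Pcol n R' := by
  have hlast : n - 2 < n - 1 := by omega
  apply Matrix.ext
  intro γ β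
  rw [Matrix.mul_apply]
  rw [Finset.sum_eq_single (⟨n - 2, hlast⟩ : Fin (n - 1))
    (fun δ _ hδ => by
      rw [show Pcol n R' γ δ = 0 from
        if_neg (fun hc => hδ (Fin.ext hc)), zero_mul])
    (fun h => absurd (Finset.mem_univ _) h)]
  by_cases hβ : β = (⟨n - 2, hlast⟩ : Fin (n - 1))
  · subst hβ
    rw [hdiag, mul_one]
  · have hβlt : (β : Fin (n-1)) < (⟨n - 2, hlast⟩ : Fin (n - 1)) := by
      have : (β : ℕ) ≤ n - 2 := by have := β.is_lt; omega
      have hne : (β : ℕ) ≠ n - 2 := fun hc => hβ (Fin.ext hc)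
      exact Fin.lt_def.mpr (show (β:ℕ) < n - 2 by omega)
    rw [hU hβlt, mul_zero]
    rw [show Pcol n R' γ β = 0 from if_neg (fun hc => hβ (Fin.ext hc))]

lemma gauge_eq {N k : ℕ} (hk : k ≤ N) (hN : 3 ≤ N) (R₁ R₂ : Mat N)
    (h₁ : IsAdaptedConn N k R₁) (h₂ : IsAdaptedConn N k R₂)
    (hP : Pcol N R₁ = Pcol N R₂) :
    ((Wmat N R₁)⁻¹ * Wmat N R₂) * R₂
      = R₁ * ((Wmat N R₁)⁻¹ * Wmat N R₂)
        + (X 0 * X 1 : PQH) •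
          (((Wmat N R₁)⁻¹ * Wmat N R₂).map (fun p => pderiv 0 p)) := by
  set W₁ := Wmat N R₁ with hW₁
  set W₂ := Wmat N R₂ with hW₂
  set U := W₁⁻¹ * W₂ with hU
  have hWU : W₁ * U = W₂ := by
    rw [hU, ← mul_assoc, Matrix.mul_nonsing_inv _ (Wmat_isUnit_det N R₁), one_mul]
  have hUtri : U.BlockTriangular id :=
    (Winv_triangular N R₁).mul (Wmat_triangular N R₂)
  have hUdiag : ∀ γ, U γ γ = 1 := by
    intro γ
    rw [hU, tri_mul_diag (Winv_triangular N R₁) (Wmat_triangular N R₂),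
      Winv_diag, Wmat_diag, one_mul]
  have expand : W₁ * (R₁ * U + (X 0 * X 1 : PQH) • (U.map fun p => pderiv 0 p))
      = Im1 N * W₂ + (X 0 * X 1 : PQH) •
          ((W₁.map fun p => pderiv 0 p) * U + W₁ * (U.map fun p => pderiv 0 p))
        - Pcol N R₂ := by
    rw [Matrix.mul_add, Matrix.mul_smul, ← Matrix.mul_assoc, Weq N R₁ hk h₁,
      Matrix.sub_mul, Matrix.add_mul, Matrix.smul_mul, Matrix.mul_assoc (Im1 N) W₁ U, hWU,
      Pcol_mul hN hUtri hUdiag R₁, hP, smul_add]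
    abel
  have key : W₁ * (U * R₂) = W₁ * (R₁ * U + (X 0 * X 1 : PQH) •
      (U.map (fun p => pderiv 0 p))) := by
    rw [← mul_assoc, hWU, Weq N R₂ hk h₂, expand, ← mderiv_mul, hWU]
  have := congrArg (fun M => W₁⁻¹ * M) key
  beta_reduce at this
  rw [← Matrix.mul_assoc W₁⁻¹ W₁ (U * R₂), ← Matrix.mul_assoc W₁⁻¹ W₁,
    Matrix.nonsing_inv_mul _ (Wmat_isUnit_det N R₁), Matrix.one_mul, Matrix.one_mul] at this
  exact this

end Gauge

section Endgame

lemma shift_kill {n : ℕ} (e : Matrix (Fin n) (Fin n) ℂ)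
    (hcomm : ∀ i j : Fin n,
      (∑ δ : Fin n, e i δ * (if (δ:ℕ) = (j:ℕ) + 1 then 1 else 0))
        = ∑ δ : Fin n, (if (i:ℕ) = (δ:ℕ) + 1 then (1:ℂ) else 0) * e δ j)
    (hstrict : ∀ i j : Fin n, (j:ℕ) ≤ (i:ℕ) → e i j = 0) :
    ∀ i j, e i j = 0 := by
  have hLs : ∀ (i j : Fin n) (h : (j:ℕ) + 1 < n),
      (∑ δ : Fin n, e i δ * (if (δ:ℕ) = (j:ℕ) + 1 then 1 else 0)) = e i ⟨(j:ℕ)+1, h⟩ := by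
    intro i j h
    rw [Finset.sum_eq_single (⟨(j:ℕ)+1, h⟩ : Fin n)
      (fun δ _ hδ => by rw [if_neg (fun hc => hδ (Fin.ext hc)), mul_zero])
      (fun hm => absurd (Finset.mem_univ _) hm)]
    rw [if_pos rfl, mul_one]
  have hRs0 : ∀ (i j : Fin n), (i:ℕ) = 0 →
      (∑ δ : Fin n, (if (i:ℕ) = (δ:ℕ) + 1 then (1:ℂ) else 0) * e δ j) = 0 :=
    fun i j hi => Finset.sum_eq_zero fun δ _ => by rw [if_neg (by omega), zero_mul]
  have hRs : ∀ (i j : Fin n) (i' : ℕ) (hi' : i' < n), (i:ℕ) = i' + 1 →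
      (∑ δ : Fin n, (if (i:ℕ) = (δ:ℕ) + 1 then (1:ℂ) else 0) * e δ j) = e ⟨i', hi'⟩ j := by
    intro i j i' hi' hii
    rw [Finset.sum_eq_single (⟨i', hi'⟩ : Fin n)
      (fun δ _ hδ => by
        rw [if_neg (fun hc => hδ (Fin.ext (show (δ:ℕ) = i' by omega))), zero_mul])
      (fun hm => absurd (Finset.mem_univ _) hm)]
    rw [if_pos (by exact hii), one_mul]
  suffices H : ∀ (i : ℕ) (hi : i < n) (j : Fin n), e ⟨i, hi⟩ j = 0 by
    intro i j
    exact H i i.is_lt j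
  intro i
  induction i using Nat.strong_induction_on with
  | _ i ih =>
    intro hi j
    by_cases hji : (j:ℕ) ≤ i
    · exact hstrict _ j hji
    · have hj1 : 1 ≤ (j:ℕ) := by omega
      have hj'lt : (j:ℕ) - 1 < n := by have := j.is_lt; omega
      set j' : Fin n := ⟨(j:ℕ) - 1, hj'lt⟩ with hj'
      have hcomm' := hcomm ⟨i, hi⟩ j'
      have hj'1 : (j':ℕ) + 1 < n := by
        show (j:ℕ) - 1 + 1 < n
        have := j.is_lt
        omega
      rw [hLs _ j' hj'1] at hcomm'
      have hjeq : (⟨(j':ℕ) + 1, hj'1⟩ : Fin n) = j := Fin.ext (show (j:ℕ) - 1 + 1 = (j:ℕ) by omega)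
      rw [hjeq] at hcomm'
      rcases Nat.eq_zero_or_pos i with rfl | hipos
      · rw [hRs0 ⟨0, hi⟩ j' rfl] at hcomm'
        exact hcomm'
      · have hi' : i - 1 < n := by omega
        rw [hRs ⟨i, hi⟩ j' (i - 1) hi' (by show i = i - 1 + 1; omega)] at hcomm'
        rw [hcomm']
        exact ih (i - 1) (by omega) hi' j'

lemma endgame_poly {n : ℕ}
    (V Vd : Matrix (Fin n) (Fin n) (Polynomial (Polynomial ℂ)))
    (a b : Matrix (Fin n) (Fin n) (Polynomial ℂ))
    (ha0 : ∀ i j, (a i j).coeff 0 = if (i:ℕ) = (j:ℕ) + 1 then 1 else 0)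
    (hb0 : ∀ i j, (b i j).coeff 0 = if (i:ℕ) = (j:ℕ) + 1 then 1 else 0)
    (hVlow : ∀ i j : Fin n, j < i → V i j = 0)
    (hVdiag : ∀ i, V i i = 1)
    (hVd : ∀ i j m, (Vd i j).coeff m = Polynomial.derivative ((V i j).coeff m))
    (heq : ∀ i j, (∑ δ : Fin n, V i δ * Polynomial.C (b δ j))
        = (∑ δ : Fin n, Polynomial.C (a i δ) * V δ j)
          + (Polynomial.C Polynomial.X * Polynomial.X) * Vd i j) :
    a = b := by
  classical
  set E : ℕ → Matrix (Fin n) (Fin n) (Polynomial ℂ) := fun m i j => (V i j).coeff m with hE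
  -- the levelwise equations
  have lv : ∀ (m : ℕ) (i j : Fin n),
      (∑ δ : Fin n, E m i δ * b δ j)
        = (∑ δ : Fin n, a i δ * E m δ j)
          + (if m = 0 then 0
              else Polynomial.X * Polynomial.derivative (E (m - 1) i j)) := by
    intro m i j
    have h := congrArg (fun p => Polynomial.coeff p m) (heq i j)
    beta_reduce at h
    rw [Polynomial.finset_sum_coeff, Polynomial.coeff_add, Polynomial.finset_sum_coeff] at h
    rw [Finset.sum_congr rfl (fun δ _ => Polynomial.coeff_mul_C _ _ _),
      Finset.sum_congr rfl (fun δ _ => Polynomial.coeff_C_mul _)] at h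
    have hlast : Polynomial.coeff ((Polynomial.C Polynomial.X * Polynomial.X) * Vd i j) m
        = (if m = 0 then 0
            else Polynomial.X * Polynomial.derivative (E (m - 1) i j)) := by
      rw [mul_assoc, Polynomial.coeff_C_mul]
      cases m with
      | zero =>
          rw [if_pos rfl]
          rw [Polynomial.mul_coeff_zero, Polynomial.coeff_X_zero, zero_mul, mul_zero]
      | succ m' =>
          rw [if_neg (by omega), Polynomial.coeff_X_mul, hVd]
          congr 1
    rw [hlast] at h
    exact h
  -- degree bound
  set Mb : ℕ := (Finset.univ.sup fun p : Fin n × Fin n => (V p.1 p.2).natDegree) + 1 with hMb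
  have hhigh : ∀ m, Mb ≤ m → ∀ i j, E m i j = 0 := by
    intro m hm i j
    refine Polynomial.coeff_eq_zero_of_natDegree_lt ?_
    calc (V i j).natDegree
        ≤ Finset.univ.sup (fun p : Fin n × Fin n => (V p.1 p.2).natDegree) :=
          Finset.le_sup (f := fun p : Fin n × Fin n => (V p.1 p.2).natDegree)
            (Finset.mem_univ (i, j))
      _ < m := by omega
  -- derivative of a level vanishes when the next level vanishes
  have hderiv : ∀ m : ℕ, (∀ i j, E (m + 1) i j = 0) →
      ∀ i j, Polynomial.derivative (E m i j) = 0 := by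
    intro m hz i j
    have h := lv (m + 1) i j
    rw [if_neg (by omega)] at h
    rw [Finset.sum_eq_zero (fun δ _ => by rw [hz i δ, zero_mul]),
      Finset.sum_eq_zero (fun δ _ => by rw [hz δ j, mul_zero]), zero_add] at h
    have h' : Polynomial.X * Polynomial.derivative (E (m + 1 - 1) i j) = 0 := h.symm
    rw [show m + 1 - 1 = m from rfl] at h'
    exact (mul_eq_zero.mp h').resolve_left Polynomial.X_ne_zero
  -- killing a positive level, given that all higher levels vanish
  have kill : ∀ m, 1 ≤ m → (∀ m', m < m' → ∀ i j, E m' i j = 0) →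
      ∀ i j, E m i j = 0 := by
    intro m hm hab
    have hder : ∀ i j, Polynomial.derivative (E m i j) = 0 :=
      hderiv m (fun i j => hab (m + 1) (by omega) i j)
    have hconst : ∀ i j, E m i j = Polynomial.C ((E m i j).coeff 0) :=
      fun i j => Polynomial.eq_C_of_derivative_eq_zero (hder i j)
    set e : Matrix (Fin n) (Fin n) ℂ := fun i j => (E m i j).coeff 0 with he
    have hcomm : ∀ i j : Fin n,
        (∑ δ : Fin n, e i δ * (if (δ:ℕ) = (j:ℕ) + 1 then 1 else 0))
          = ∑ δ : Fin n, (if (i:ℕ) = (δ:ℕ) + 1 then (1:ℂ) else 0) * e δ j := by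
      intro i j
      have h0 := lv m i j
      rw [if_neg (by omega)] at h0
      have h := congrArg (fun p => Polynomial.coeff p 0) h0
      beta_reduce at h
      rw [Polynomial.finset_sum_coeff, Polynomial.coeff_add, Polynomial.finset_sum_coeff] at h
      have hL : ∑ δ : Fin n, (E m i δ * b δ j).coeff 0
          = ∑ δ : Fin n, (E m i δ).coeff 0 * (if (δ:ℕ) = (j:ℕ) + 1 then 1 else 0) :=
        Finset.sum_congr rfl fun δ _ => by rw [Polynomial.mul_coeff_zero, hb0 δ j]
      have hR : ∑ δ : Fin n, (a i δ * E m δ j).coeff 0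
          = ∑ δ : Fin n, (if (i:ℕ) = (δ:ℕ) + 1 then (1:ℂ) else 0) * (E m δ j).coeff 0 :=
        Finset.sum_congr rfl fun δ _ => by rw [Polynomial.mul_coeff_zero, ha0 i δ]
      rw [hL, hR, Polynomial.mul_coeff_zero, Polynomial.coeff_X_zero, zero_mul, add_zero] at h
      exact h
    have hstrict : ∀ i j : Fin n, (j:ℕ) ≤ (i:ℕ) → e i j = 0 := by
      intro i j hji
      rcases Nat.lt_or_ge (j:ℕ) (i:ℕ) with hlt | hge
      · rw [he]
        show (E m i j).coeff 0 = 0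
        rw [hE]
        show ((V i j).coeff m).coeff 0 = 0
        rw [hVlow i j (Fin.lt_def.mpr hlt), Polynomial.coeff_zero, Polynomial.coeff_zero]
      · have hij : i = j := Fin.ext (by omega)
        subst hij
        show ((V i i).coeff m).coeff 0 = 0
        rw [hVdiag i, Polynomial.coeff_one, if_neg (by omega), Polynomial.coeff_zero]
    have := shift_kill e hcomm hstrict
    intro i j
    rw [hconst i j, show (E m i j).coeff 0 = e i j from rfl, this i j, map_zero]
  -- all positive levels vanish
  have step : ∀ t m, 1 ≤ m → Mb - t ≤ m → ∀ i j, E m i j = 0 := by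
    intro t
    induction t with
    | zero => intro m hm hMbm i j; exact hhigh m (by omega) i j
    | succ t ih =>
        intro m hm hMbm i j
        by_cases hc : Mb - t ≤ m
        · exact ih m hm hc i j
        · exact kill m hm (fun m' hm' i' j' => ih m' (by omega) (by omega) i' j') i j
  have allhigh : ∀ m, 1 ≤ m → ∀ i j, E m i j = 0 :=
    fun m hm => step Mb m hm (by omega)
  -- level 0 is a constant matrix
  have hder0 : ∀ i j, Polynomial.derivative (E 0 i j) = 0 :=
    hderiv 0 (fun i j => allhigh 1 le_rfl i j)
  have hconst0 : ∀ i j, E 0 i j = Polynomial.C ((E 0 i j).coeff 0) :=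
    fun i j => Polynomial.eq_C_of_derivative_eq_zero (hder0 i j)
  set e0 : Matrix (Fin n) (Fin n) ℂ := fun i j => (E 0 i j).coeff 0 with he0
  have hcomm0 : ∀ i j : Fin n,
      (∑ δ : Fin n, e0 i δ * (if (δ:ℕ) = (j:ℕ) + 1 then 1 else 0))
        = ∑ δ : Fin n, (if (i:ℕ) = (δ:ℕ) + 1 then (1:ℂ) else 0) * e0 δ j := by
    intro i j
    have h0 := lv 0 i j
    rw [if_pos rfl, add_zero] at h0
    have h := congrArg (fun p => Polynomial.coeff p 0) h0
    beta_reduce at h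
    rw [Polynomial.finset_sum_coeff, Polynomial.finset_sum_coeff] at h
    have hL : ∑ δ : Fin n, (E 0 i δ * b δ j).coeff 0
        = ∑ δ : Fin n, (E 0 i δ).coeff 0 * (if (δ:ℕ) = (j:ℕ) + 1 then 1 else 0) :=
      Finset.sum_congr rfl fun δ _ => by rw [Polynomial.mul_coeff_zero, hb0 δ j]
    have hR : ∑ δ : Fin n, (a i δ * E 0 δ j).coeff 0
        = ∑ δ : Fin n, (if (i:ℕ) = (δ:ℕ) + 1 then (1:ℂ) else 0) * (E 0 δ j).coeff 0 :=
      Finset.sum_congr rfl fun δ _ => by rw [Polynomial.mul_coeff_zero, ha0 i δ]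
    rw [hL, hR] at h
    exact h
  -- `e0` differs from the identity by a strict upper triangular commuting matrix
  set s : Matrix (Fin n) (Fin n) ℂ :=
    fun i j => e0 i j - (if i = j then 1 else 0) with hs
  have hscomm : ∀ i j : Fin n,
      (∑ δ : Fin n, s i δ * (if (δ:ℕ) = (j:ℕ) + 1 then 1 else 0))
        = ∑ δ : Fin n, (if (i:ℕ) = (δ:ℕ) + 1 then (1:ℂ) else 0) * s δ j := by
    intro i j
    have hid1 : (∑ δ : Fin n, (if i = δ then (1:ℂ) else 0) * (if (δ:ℕ) = (j:ℕ) + 1 then 1 else 0))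
        = (if (i:ℕ) = (j:ℕ) + 1 then (1:ℂ) else 0) := by
      rw [Finset.sum_eq_single i
        (fun δ _ hδ => by rw [if_neg (fun hc => hδ hc.symm), zero_mul])
        (fun hm => absurd (Finset.mem_univ _) hm)]
      rw [if_pos rfl, one_mul]
    have hid2 : (∑ δ : Fin n, (if (i:ℕ) = (δ:ℕ) + 1 then (1:ℂ) else 0) * (if δ = j then (1:ℂ) else 0))
        = (if (i:ℕ) = (j:ℕ) + 1 then (1:ℂ) else 0) := by
      rw [Finset.sum_eq_single j
        (fun δ _ hδ => by rw [if_neg (fun hc => hδ hc), mul_zero])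
        (fun hm => absurd (Finset.mem_univ _) hm)]
      rw [if_pos rfl, mul_one]
    have expand1 : (∑ δ : Fin n, s i δ * (if (δ:ℕ) = (j:ℕ) + 1 then 1 else 0))
        = (∑ δ : Fin n, e0 i δ * (if (δ:ℕ) = (j:ℕ) + 1 then 1 else 0))
          - (if (i:ℕ) = (j:ℕ) + 1 then (1:ℂ) else 0) := by
      rw [← hid1, ← Finset.sum_sub_distrib]
      refine Finset.sum_congr rfl fun δ _ => ?_
      rw [hs]
      ring
    have expand2 : (∑ δ : Fin n, (if (i:ℕ) = (δ:ℕ) + 1 then (1:ℂ) else 0) * s δ j)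
        = (∑ δ : Fin n, (if (i:ℕ) = (δ:ℕ) + 1 then (1:ℂ) else 0) * e0 δ j)
          - (if (i:ℕ) = (j:ℕ) + 1 then (1:ℂ) else 0) := by
      rw [← hid2, ← Finset.sum_sub_distrib]
      refine Finset.sum_congr rfl fun δ _ => ?_
      rw [hs]
      ring
    rw [expand1, expand2, hcomm0 i j]
  have hsstrict : ∀ i j : Fin n, (j:ℕ) ≤ (i:ℕ) → s i j = 0 := by
    intro i j hji
    rcases Nat.lt_or_ge (j:ℕ) (i:ℕ) with hlt | hge
    · have h1 : e0 i j = 0 := by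
        show ((V i j).coeff 0).coeff 0 = 0
        rw [hVlow i j (Fin.lt_def.mpr hlt), Polynomial.coeff_zero, Polynomial.coeff_zero]
      rw [hs]
      show e0 i j - (if i = j then (1:ℂ) else 0) = 0
      rw [h1, if_neg (fun hc => by subst hc; omega), sub_zero]
    · have hij : i = j := Fin.ext (by omega)
      subst hij
      have h1 : e0 i i = 1 := by
        show ((V i i).coeff 0).coeff 0 = 1
        rw [hVdiag i, Polynomial.coeff_one, if_pos rfl, Polynomial.coeff_one, if_pos rfl]
      rw [hs]
      show e0 i i - (if i = i then (1:ℂ) else 0) = 0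
      rw [h1, if_pos rfl, sub_self]
  have hszero := shift_kill s hscomm hsstrict
  have he0id : ∀ i j, e0 i j = if i = j then (1:ℂ) else 0 := by
    intro i j
    have h2 : e0 i j - (if i = j then (1:ℂ) else 0) = 0 := hszero i j
    exact sub_eq_zero.mp h2
  have hV1 : ∀ i j, V i j = if i = j then 1 else 0 := by
    intro i j
    apply Polynomial.ext
    intro m
    cases m with
    | zero =>
        have h1 : (V i j).coeff 0 = E 0 i j := rfl
        rw [h1, hconst0 i j, show (E 0 i j).coeff 0 = e0 i j from rfl, he0id i j]
        by_cases hij : i = j <;> simp [hij]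
    | succ m' =>
        have h1 : (V i j).coeff (m' + 1) = E (m' + 1) i j := rfl
        rw [h1, allhigh (m' + 1) (by omega) i j]
        by_cases hij : i = j <;> simp [hij, Polynomial.coeff_one]
  have hVdz : ∀ i j, Vd i j = 0 := by
    intro i j
    apply Polynomial.ext
    intro m
    rw [hVd i j m, Polynomial.coeff_zero, hV1 i j]
    by_cases hij : i = j <;> simp [hij, Polynomial.coeff_one] <;> split_ifs <;> simp
  apply Matrix.ext
  intro i j
  have h := heq i j
  have hLs2 : ∑ δ : Fin n, V i δ * Polynomial.C (b δ j) = Polynomial.C (b i j) := by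
    rw [Finset.sum_eq_single i
      (fun δ _ hδ => by rw [hV1 i δ, if_neg (fun hc => hδ hc.symm), zero_mul])
      (fun hm => absurd (Finset.mem_univ _) hm), hV1 i i, if_pos rfl, one_mul]
  have hRs2 : ∑ δ : Fin n, Polynomial.C (a i δ) * V δ j = Polynomial.C (a i j) := by
    rw [Finset.sum_eq_single j
      (fun δ _ hδ => by rw [hV1 δ j, if_neg hδ, mul_zero])
      (fun hm => absurd (Finset.mem_univ _) hm), hV1 j j, if_pos rfl, mul_one]
  rw [hLs2, hRs2, hVdz i j, mul_zero, add_zero] at h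
  exact Polynomial.C_injective h.symm

end Endgame

section Assembly

lemma coeff00_Phi (p : PQH) :
    ((Phi p).coeff 0).coeff 0 = MvPolynomial.constantCoeff p := by
  have h : (Polynomial.constantCoeff.comp
        ((Polynomial.constantCoeff (R := Polynomial ℂ)).comp Phi.toRingHom))
      = (MvPolynomial.constantCoeff : PQH →+* ℂ) := by
    apply MvPolynomial.ringHom_ext
    · intro r
      simp [Phi_C]
    · intro i
      rcases fin2_cases i with rfl | rfl
      · simp [Phi_X0]
      · simp [Phi_X1]
  have := RingHom.congr_fun h p
  simpa [Polynomial.constantCoeff_apply] using this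

lemma constCoeff_q0 (p : PQH) :
    MvPolynomial.constantCoeff (q0 p) = MvPolynomial.constantCoeff p := by
  have h : ((MvPolynomial.constantCoeff : PQH →+* ℂ).comp q0.toRingHom)
      = (MvPolynomial.constantCoeff : PQH →+* ℂ) := by
    apply MvPolynomial.ringHom_ext
    · intro r
      simp [q0]
    · intro i
      rcases fin2_cases i with rfl | rfl
      · simp [q0]
      · simp [q0]
  exact RingHom.congr_fun h p

lemma Phi_entry_C {N : ℕ} {R : Mat N} (hl : IsHinvLinear N R) (i j : Fin (N - 1)) :
    Phi (R i j) = Polynomial.C ((Phi (R i j)).coeff 0) := by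
  obtain ⟨g, hg⟩ := Phi_hfree (R i j) (hl i j)
  rw [hg, Polynomial.coeff_C_zero]

lemma coeff0_entry {N k : ℕ} {R : Mat N} (h : IsAdaptedConn N k R) (i j : Fin (N - 1)) :
    ((Phi (R i j)).coeff 0).coeff 0 = if (i:ℕ) = (j:ℕ) + 1 then 1 else 0 := by
  rw [coeff00_Phi, ← constCoeff_q0]
  have hinit := congrFun (congrFun h.init i) j
  rw [Matrix.map_apply] at hinit
  rw [hinit]
  unfold Im1
  by_cases hc : (i:ℕ) = (j:ℕ) + 1 <;> simp [hc]

end Assembly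


/-- **Uniqueness of the `h⁻¹`-linear adapted family with reduced operator `P^{N,k}`.**
There is at most one adapted family of connection 1-forms which is `h⁻¹`-linear and
whose reduced operator equals the Picard–Fuchs operator `P^{N,k}`. -/
theorem uniqueness_for_picard_fuchs_reduced_operator
    (N k : ℕ) (hk : 2 ≤ k) (hNk : k < N)
    (R₁ R₂ : Mat N)
    (h₁ : IsAdaptedConn N k R₁) (h₂ : IsAdaptedConn N k R₂)
    (hl₁ : IsHinvLinear N R₁) (hl₂ : IsHinvLinear N R₂)
    (hred₁ : Pops N R₁ (N - 1) = PNK N k)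
    (hred₂ : Pops N R₂ (N - 1) = PNK N k) :
    R₁ = R₂ := by
  have hN3 : 3 ≤ N := by omega
  have hkN : k ≤ N := le_of_lt hNk
  -- the coefficients of the reduced operators agree
  have hPP : Pops N R₁ (N - 1) = Pops N R₂ (N - 1) := by rw [hred₁, hred₂]
  have h1 := Pops_eq N R₁ (N - 1) le_rfl
  have h2 := Pops_eq N R₂ (N - 1) le_rfl
  have hzero : ∑ γ ∈ Finset.range (N - 1 + 1),
      mulOp (sigmaC N R₁ (N - 1) γ - sigmaC N R₂ (N - 1) γ) * hD ^ γ = 0 := by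
    rw [Finset.sum_congr rfl (fun γ _ => by rw [mulOp_sub, sub_mul])]
    rw [Finset.sum_sub_distrib, ← h1, ← h2, hPP, sub_self]
  have hsig : ∀ γ < N - 1 + 1, sigmaC N R₁ (N - 1) γ = sigmaC N R₂ (N - 1) γ :=
    fun γ hγ => sub_eq_zero.mp (extraction _ _ hzero γ hγ)
  have hP : Pcol N R₁ = Pcol N R₂ := by
    apply Matrix.ext
    intro γ β
    show (if (β:ℕ) = N - 2 then sigmaC N R₁ (N - 1) (γ:ℕ) else 0)
      = (if (β:ℕ) = N - 2 then sigmaC N R₂ (N - 1) (γ:ℕ) else 0)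
    by_cases hb : (β:ℕ) = N - 2
    · rw [if_pos hb, if_pos hb, hsig (γ:ℕ) (by have := γ.is_lt; omega)]
    · rw [if_neg hb, if_neg hb]
  -- the gauge transformation between the two families
  set U : Mat N := (Wmat N R₁)⁻¹ * Wmat N R₂ with hUdef
  have hgauge : U * R₂ = R₁ * U + (X 0 * X 1 : PQH) • (U.map (fun p => pderiv 0 p)) :=
    gauge_eq hkN hN3 R₁ R₂ h₁ h₂ hP
  have hUtri : U.BlockTriangular id :=
    (Winv_triangular N R₁).mul (Wmat_triangular N R₂)
  have hUdiag : ∀ γ, U γ γ = 1 := fun γ => by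
    rw [hUdef, tri_mul_diag (Winv_triangular N R₁) (Wmat_triangular N R₂),
      Winv_diag, Wmat_diag, one_mul]
  -- translate everything through `Phi`
  set a : Matrix (Fin (N-1)) (Fin (N-1)) (Polynomial ℂ) :=
    fun i j => (Phi (R₁ i j)).coeff 0 with ha
  set b : Matrix (Fin (N-1)) (Fin (N-1)) (Polynomial ℂ) :=
    fun i j => (Phi (R₂ i j)).coeff 0 with hb
  have haC : ∀ i j, Phi (R₁ i j) = Polynomial.C (a i j) := fun i j => Phi_entry_C hl₁ i j
  have hbC : ∀ i j, Phi (R₂ i j) = Polynomial.C (b i j) := fun i j => Phi_entry_C hl₂ i j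
  have ha0 : ∀ i j, (a i j).coeff 0 = if (i:ℕ) = (j:ℕ) + 1 then 1 else 0 :=
    fun i j => coeff0_entry h₁ i j
  have hb0 : ∀ i j, (b i j).coeff 0 = if (i:ℕ) = (j:ℕ) + 1 then 1 else 0 :=
    fun i j => coeff0_entry h₂ i j
  have hVlow : ∀ i j : Fin (N-1), j < i → Phi (U i j) = 0 := by
    intro i j hlt
    rw [hUtri hlt, map_zero]
  have hVdiag : ∀ i, Phi (U i i) = 1 := by
    intro i
    rw [hUdiag i, _root_.map_one]
  have heq : ∀ i j : Fin (N-1),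
      (∑ δ : Fin (N-1), Phi (U i δ) * Polynomial.C (b δ j))
        = (∑ δ : Fin (N-1), Polynomial.C (a i δ) * Phi (U δ j))
          + (Polynomial.C Polynomial.X * Polynomial.X) * Phi (pderiv 0 (U i j)) := by
    intro i j
    have hstep1 : (∑ δ : Fin (N-1), Phi (U i δ) * Polynomial.C (b δ j))
        = Phi ((U * R₂) i j) := by
      rw [Matrix.mul_apply, map_sum]
      exact Finset.sum_congr rfl fun δ _ => by rw [_root_.map_mul, hbC δ j]
    have hstep2 : Phi (((X 0 * X 1 : PQH) • (U.map (fun p => pderiv 0 p))) i j)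
        = (Polynomial.C Polynomial.X * Polynomial.X) * Phi (pderiv 0 (U i j)) := by
      rw [Matrix.smul_apply, Matrix.map_apply, smul_eq_mul, _root_.map_mul,
        _root_.map_mul, Phi_X0, Phi_X1]
    have hstep3 : Phi ((R₁ * U) i j) = ∑ δ : Fin (N-1), Polynomial.C (a i δ) * Phi (U δ j) := by
      rw [Matrix.mul_apply, map_sum]
      exact Finset.sum_congr rfl fun δ _ => by rw [_root_.map_mul, haC i δ]
    rw [hstep1, hgauge, Matrix.add_apply, _root_.map_add, hstep2, hstep3]
  have hab : a = b :=
    endgame_poly (fun i j => Phi (U i j)) (fun i j => Phi (pderiv 0 (U i j)))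
      a b ha0 hb0 hVlow hVdiag (fun i j m => Phi_pderiv (U i j) m) heq
  apply Matrix.ext
  intro i j
  apply Phi_injective
  rw [haC i j, hbC i j, hab]

end
end

section
/- Let ω, θ₀, θ₁, …, θ_p be n×n matrices over ℂ[[q]] and set Ω := h⁻¹ω + θ₀ + hθ₁ + ⋯ + h^pθ_p. Let Q₀, Q₁, Q₂, … be n×n matrices over ℂ[[q]] with Q₀ invertible, and set L₊ := Q₀·(I + hQ₁ + h²Q₂ + ⋯), an invertible element of the ring of formal power series in h with coefficients in n×n matrices over ℂ[[q]]. Suppose that in the formal Laurent series L₊·Ω·L₊⁻¹ − (D L₊)·L₊⁻¹ the coefficient of hʲ vanishes for every j ≥ 0. Then: D Q₀ = Q₀·(θ₀ + [Q₁, ω]); D Q₁ = θ₁ + [Q₁, θ₀] + [Q₂, ω] − [Q₁, ω]·Q₁; and for every i ≥ 2, D Q_i = θ_i + Q₁θ_{i−1} + Q₂θ_{i−2} + ⋯ + Q_{i−1}θ₁ + [Q_i, θ₀] + [Q_{i+1}, ω] − [Q₁, ω]·Q_i, where θ_j := 0 for j > p. -/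
noncomputable section

/-- `n×n` matrices over the formal power series ring `ℂ[[q]]`. -/
abbrev MatP (n : ℕ) := Matrix (Fin n) (Fin n) (PowerSeries ℂ)

/-- the derivation `q d/dq` of `ℂ[[q]]`: it sends `Σ aₘ qᵐ` to `Σ m aₘ qᵐ`. -/
def DPS : PowerSeries ℂ → PowerSeries ℂ :=
  fun f => PowerSeries.mk fun m => (m : ℂ) * PowerSeries.coeff (R := ℂ) m f

/-- `q d/dq` applied entrywise to a matrix over `ℂ[[q]]`. -/
def DM (n : ℕ) (A : MatP n) : MatP n := A.map DPS

/-- `q d/dq` applied coefficientwise to a formal series in `h` with matrix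
coefficients. -/
def DL (n : ℕ) (F : PowerSeries (MatP n)) : PowerSeries (MatP n) :=
  PowerSeries.mk fun i => DM n (PowerSeries.coeff (R := MatP n) i F)

lemma DPS_sum {ι : Type*} (s : Finset ι) (f : ι → PowerSeries ℂ) :
    DPS (∑ i ∈ s, f i) = ∑ i ∈ s, DPS (f i) := by
  ext m
  simp [DPS, Finset.mul_sum]

lemma DPS_mul (f g : PowerSeries ℂ) : DPS (f * g) = DPS f * g + f * DPS g := by
  ext m
  simp only [DPS, PowerSeries.coeff_mk, map_add, PowerSeries.coeff_mul]
  rw [Finset.mul_sum, ← Finset.sum_add_distrib]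
  refine Finset.sum_congr rfl fun x hx => ?_
  rw [Finset.HasAntidiagonal.mem_antidiagonal] at hx
  subst hx
  push_cast
  ring

lemma DM_mul (n : ℕ) (A B : MatP n) : DM n (A * B) = DM n A * B + A * DM n B := by
  ext i k
  simp only [DM, Matrix.map_apply, Matrix.mul_apply, Matrix.add_apply]
  rw [DPS_sum, ← Finset.sum_add_distrib]
  exact congrArg _ (Finset.sum_congr rfl fun j _ => DPS_mul _ _)

/-- **Proposition (prop:Lplus): the differential equations satisfied by the Birkhoff
factor `L₊`.**  Here `L₊ = Q₀(I + hQ₁ + h²Q₂ + ⋯)` is an invertible formal power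
series in `h` (with two-sided inverse `Linv`), and the hypothesis `hvanish` encodes
that all coefficients of `hʲ`, `j ≥ 0`, of the formal Laurent series
`L₊ Ω L₊⁻¹ − (DL₊)L₊⁻¹`, where `Ω = h⁻¹ω + θ₀ + hθ₁ + ⋯ + h^pθ_p`, vanish: after
multiplying through by `h`, this Laurent series becomes the power series
`L₊(ω + hθ₀ + h²θ₁ + ⋯)L₊⁻¹ − h(DL₊)L₊⁻¹`, whose coefficients of `hʲ`, `j ≥ 1`, are
required to vanish.  The conclusions are the equations `(ℒ₀)`, `(ℒ₁)`, `(ℒᵢ)`. -/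
theorem birkhoff_plus_factor_equations
    (n p : ℕ) (hn : 1 ≤ n)
    (ω : MatP n) (θ : ℕ → MatP n) (hθ : ∀ j, p < j → θ j = 0)
    (Q : ℕ → MatP n) (hQ0 : IsUnit (Q 0))
    (Lplus Linv : PowerSeries (MatP n))
    (hL : Lplus = PowerSeries.mk fun i => if i = 0 then Q 0 else Q 0 * Q i)
    (hinv₁ : Lplus * Linv = 1) (hinv₂ : Linv * Lplus = 1)
    (hvanish : ∀ j : ℕ, 1 ≤ j →
      PowerSeries.coeff (R := MatP n) j
        (Lplus * (PowerSeries.C (R := MatP n) ω + PowerSeries.X * PowerSeries.mk θ) * Linv -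
          PowerSeries.X * DL n Lplus * Linv) = 0) :
    DM n (Q 0) = Q 0 * (θ 0 + (Q 1 * ω - ω * Q 1)) ∧
    DM n (Q 1) =
      θ 1 + (Q 1 * θ 0 - θ 0 * Q 1) + (Q 2 * ω - ω * Q 2) - (Q 1 * ω - ω * Q 1) * Q 1 ∧
    (∀ i, 2 ≤ i →
      DM n (Q i) =
        θ i + (∑ j ∈ Finset.Icc 1 (i - 1), Q j * θ (i - j)) +
          (Q i * θ 0 - θ 0 * Q i) + (Q (i + 1) * ω - ω * Q (i + 1)) -
          (Q 1 * ω - ω * Q 1) * Q i) := by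
  set A := PowerSeries.C (R := MatP n) ω + PowerSeries.X * PowerSeries.mk θ with hA
  set V := PowerSeries.constantCoeff (R := MatP n) Linv with hVdef
  have hL0 : PowerSeries.coeff (R := MatP n) 0 Lplus = Q 0 := by
    simp [hL, PowerSeries.coeff_mk]
  have hLs : ∀ i, i ≠ 0 → PowerSeries.coeff (R := MatP n) i Lplus = Q 0 * Q i := fun i hi => by
    simp [hL, PowerSeries.coeff_mk, hi]
  have hcL : PowerSeries.constantCoeff (R := MatP n) Lplus = Q 0 := by
    rw [← PowerSeries.coeff_zero_eq_constantCoeff]; exact hL0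
  have hV2 : V * Q 0 = 1 := by
    have := congrArg (PowerSeries.constantCoeff (R := MatP n)) hinv₂
    rwa [map_mul, map_one, hcL] at this
  have hcan : ∀ X Y : MatP n, Q 0 * X = Q 0 * Y → X = Y := by
    intro X Y h
    calc X = V * (Q 0 * X) := by rw [← mul_assoc, hV2, one_mul]
    _ = V * (Q 0 * Y) := by rw [h]
    _ = Y := by rw [← mul_assoc, hV2, one_mul]
  set c := Q 0 * ω * V with hc
  have hcQ : ∀ B : MatP n, c * (Q 0 * B) = Q 0 * (ω * B) := by
    intro B
    calc c * (Q 0 * B) = (Q 0 * ω) * ((V * Q 0) * B) := by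
          rw [hc]; simp only [mul_assoc]
    _ = Q 0 * (ω * B) := by rw [hV2, one_mul, mul_assoc]
  -- the key identity
  have hF : Lplus * A - PowerSeries.X * DL n Lplus = PowerSeries.C (R := MatP n) c * Lplus := by
    have h1 : (Lplus * A - PowerSeries.X * DL n Lplus) * Linv = PowerSeries.C (R := MatP n) c := by
      ext j
      cases j with
      | zero =>
        rw [sub_mul]
        simp only [PowerSeries.coeff_zero_eq_constantCoeff, map_sub, map_mul, map_add,
          PowerSeries.constantCoeff_X, PowerSeries.constantCoeff_C, hA, hcL,
          PowerSeries.coeff_zero_eq_constantCoeff, zero_mul, add_zero, sub_zero, ← hVdef, hc]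
      | succ j =>
        rw [sub_mul]
        rw [hvanish (j + 1) (by omega)]
        rw [PowerSeries.coeff_C]
        simp
    calc Lplus * A - PowerSeries.X * DL n Lplus
        = ((Lplus * A - PowerSeries.X * DL n Lplus) * Linv) * Lplus := by
          rw [mul_assoc, hinv₂, mul_one]
    _ = PowerSeries.C (R := MatP n) c * Lplus := by rw [h1]
  have key : ∀ j : ℕ,
      PowerSeries.coeff (R := MatP n) (j + 1) (Lplus * A) -
          DM n (PowerSeries.coeff (R := MatP n) j Lplus)
        = c * PowerSeries.coeff (R := MatP n) (j + 1) Lplus := by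
    intro j
    have h := congrArg (PowerSeries.coeff (R := MatP n) (j + 1)) hF
    rwa [map_sub, PowerSeries.coeff_succ_X_mul, PowerSeries.coeff_C_mul, DL,
      PowerSeries.coeff_mk] at h
  have hLA : ∀ j : ℕ,
      PowerSeries.coeff (R := MatP n) (j + 1) (Lplus * A) =
        PowerSeries.coeff (R := MatP n) (j + 1) Lplus * ω +
          ∑ a ∈ Finset.range (j + 1), PowerSeries.coeff (R := MatP n) a Lplus * θ (j - a) := by
    intro j
    have hx : Lplus * (PowerSeries.X * PowerSeries.mk θ)
        = PowerSeries.X * (Lplus * PowerSeries.mk θ) := by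
      rw [← mul_assoc, (PowerSeries.commute_X Lplus).eq, mul_assoc]
    rw [hA, mul_add, map_add, PowerSeries.coeff_mul_C, hx, PowerSeries.coeff_succ_X_mul,
      PowerSeries.coeff_mul, Finset.Nat.sum_antidiagonal_eq_sum_range_succ_mk]
    simp only [PowerSeries.coeff_mk]
  -- equation (ℒ₀)
  have e0 : DM n (Q 0) = Q 0 * (θ 0 + (Q 1 * ω - ω * Q 1)) := by
    have k := key 0
    rw [hLA 0] at k
    simp only [Finset.sum_range_succ, Finset.sum_range_zero, zero_add, Nat.sub_zero,
      Nat.sub_self] at k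
    rw [hL0, hLs (0 + 1) (by omega), hcQ] at k
    have h2 : DM n (Q 0) =
        Q 0 * Q (0 + 1) * ω + Q 0 * θ 0 - Q 0 * (ω * Q (0 + 1)) := by rw [← k]; abel
    rw [h2]
    noncomm_ring
  refine ⟨e0, ?_, ?_⟩
  · -- equation (ℒ₁)
    have k := key 1
    rw [hLA 1] at k
    simp only [Finset.sum_range_succ, Finset.sum_range_zero, zero_add, Nat.sub_zero,
      Nat.sub_self] at k
    rw [hL0, hLs 1 (by omega), hLs (1 + 1) (by omega), hcQ, DM_mul, e0] at k
    apply hcan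
    have h2 : Q 0 * DM n (Q 1) =
        Q 0 * Q (1 + 1) * ω + (Q 0 * θ 1 + Q 0 * Q 1 * θ 0) -
          Q 0 * (θ 0 + (Q 1 * ω - ω * Q 1)) * Q 1 - Q 0 * (ω * Q (1 + 1)) := by
      rw [← k]; abel
    rw [h2]
    have h21 : (1 + 1 : ℕ) = 2 := rfl
    rw [h21]
    noncomm_ring
  · -- equations (ℒᵢ), i ≥ 2
    intro i hi
    have hsum :
        (∑ a ∈ Finset.range (i + 1), PowerSeries.coeff (R := MatP n) a Lplus * θ (i - a))
          = Q 0 * θ i + Q 0 * (∑ j ∈ Finset.Icc 1 (i - 1), Q j * θ (i - j)) +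
              (Q 0 * Q i) * θ 0 := by
      obtain ⟨m, rfl⟩ : ∃ m, i = m + 1 := ⟨i - 1, by omega⟩
      rw [Finset.sum_range_succ']
      rw [Finset.sum_range_succ]
      simp only [Nat.sub_zero, Nat.sub_self, Nat.add_sub_cancel]
      rw [hL0, hLs (m + 1) (by omega)]
      have hT : (∑ x ∈ Finset.range m,
            PowerSeries.coeff (R := MatP n) (x + 1) Lplus * θ (m + 1 - (x + 1)))
          = Q 0 * ∑ j ∈ Finset.Icc 1 m, Q j * θ (m + 1 - j) := by
        rw [Finset.mul_sum, show Finset.Icc 1 m = Finset.Ico 1 (m + 1) from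
          (Finset.Ico_add_one_right_eq_Icc 1 m).symm, Finset.sum_Ico_eq_sum_range]
        simp only [Nat.add_sub_cancel]
        refine Finset.sum_congr rfl fun x hx => ?_
        have e1 : 1 + x = x + 1 := Nat.add_comm 1 x
        rw [e1, hLs (x + 1) (by omega), mul_assoc]
      rw [hT]
      abel
    have k := key i
    rw [hLA i, hsum, hLs (i + 1) (by omega), hLs i (by omega), hcQ, DM_mul, e0] at k
    apply hcan
    have h2 : Q 0 * DM n (Q i) =
        Q 0 * Q (i + 1) * ω +
          (Q 0 * θ i + Q 0 * (∑ j ∈ Finset.Icc 1 (i - 1), Q j * θ (i - j)) +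
            Q 0 * Q i * θ 0) -
          Q 0 * (θ 0 + (Q 1 * ω - ω * Q 1)) * Q i - Q 0 * (ω * Q (i + 1)) := by
      rw [← k]; abel
    rw [h2]
    noncomm_ring

end
end

section
/- Let L₀¹, L₁¹, L₂¹, L₂² ∈ ℂ and let ψ₀, ψ₁, ψ₂, ψ₃ : ℝ → ℂ be differentiable functions satisfying, for all t ∈ ℝ: ψ₀′(t) = ψ₁(t); ψ₁′(t) = ψ₂(t) + L₂¹·eᵗ·ψ₀(t); ψ₂′(t) = ψ₃(t) + L₁¹·eᵗ·ψ₁(t); ψ₃′(t) = L₀¹·eᵗ·ψ₂(t) + L₂²·e²ᵗ·ψ₀(t). Then ψ₀ is four times differentiable and satisfies, for all t ∈ ℝ, ψ₀⁗(t) = eᵗ·((L₂¹ + L₁¹ + L₀¹)·ψ₀″(t) + (2L₂¹ + L₁¹)·ψ₀′(t) + L₂¹·ψ₀(t)) + e²ᵗ·(L₂² − L₀¹·L₂¹)·ψ₀(t); that is, the Gauss–Manin system for the cubic hypersurface M₅³ reduces to a single fourth-order ordinary differential equation for ψ₀. -/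
open Complex

/-- **Reduction of the Gauss–Manin system of `M₅³` to a fourth-order o.d.e.**
If `ψ₀′ = ψ₁`, `ψ₁′ = ψ₂ + L₂¹eᵗψ₀`, `ψ₂′ = ψ₃ + L₁¹eᵗψ₁`,
`ψ₃′ = L₀¹eᵗψ₂ + L₂²e²ᵗψ₀`, then `ψ₀` is four times differentiable and
`ψ₀⁗ = eᵗ((L₂¹+L₁¹+L₀¹)ψ₀″ + (2L₂¹+L₁¹)ψ₀′ + L₂¹ψ₀) + e²ᵗ(L₂²−L₀¹L₂¹)ψ₀`. -/
theorem gauss_manin_M53_reduces_to_fourth_order_ode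
    (L01 L11 L21 L22 : ℂ)
    (ψ₀ ψ₁ ψ₂ ψ₃ : ℝ → ℂ)
    (hd₀ : Differentiable ℝ ψ₀) (hd₁ : Differentiable ℝ ψ₁)
    (hd₂ : Differentiable ℝ ψ₂) (hd₃ : Differentiable ℝ ψ₃)
    (h₀ : ∀ t : ℝ, deriv ψ₀ t = ψ₁ t)
    (h₁ : ∀ t : ℝ, deriv ψ₁ t = ψ₂ t + L21 * Complex.exp t * ψ₀ t)
    (h₂ : ∀ t : ℝ, deriv ψ₂ t = ψ₃ t + L11 * Complex.exp t * ψ₁ t)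
    (h₃ : ∀ t : ℝ,
      deriv ψ₃ t = L01 * Complex.exp t * ψ₂ t + L22 * Complex.exp (2 * t) * ψ₀ t) :
    Differentiable ℝ (deriv ψ₀) ∧
    Differentiable ℝ (deriv (deriv ψ₀)) ∧
    Differentiable ℝ (deriv (deriv (deriv ψ₀))) ∧
    ∀ t : ℝ,
      deriv (deriv (deriv (deriv ψ₀))) t =
        Complex.exp t *
            ((L21 + L11 + L01) * deriv (deriv ψ₀) t + (2 * L21 + L11) * deriv ψ₀ t +
              L21 * ψ₀ t) +
          Complex.exp (2 * t) * (L22 - L01 * L21) * ψ₀ t := by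
  have hexp : ∀ t : ℝ, HasDerivAt (fun s : ℝ => Complex.exp s) (Complex.exp t) t :=
    fun t => (Complex.hasDerivAt_exp (t : ℂ)).comp_ofReal
  have hdexp : Differentiable ℝ (fun s : ℝ => Complex.exp s) :=
    fun t => (hexp t).differentiableAt
  have hψ₀ : ∀ t, HasDerivAt ψ₀ (ψ₁ t) t := fun t => h₀ t ▸ (hd₀ t).hasDerivAt
  have hψ₁ : ∀ t, HasDerivAt ψ₁ (ψ₂ t + L21 * Complex.exp t * ψ₀ t) t :=
    fun t => h₁ t ▸ (hd₁ t).hasDerivAt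
  have hψ₂ : ∀ t, HasDerivAt ψ₂ (ψ₃ t + L11 * Complex.exp t * ψ₁ t) t :=
    fun t => h₂ t ▸ (hd₂ t).hasDerivAt
  have hψ₃ : ∀ t : ℝ, HasDerivAt ψ₃
      (L01 * Complex.exp t * ψ₂ t + L22 * Complex.exp (2 * t) * ψ₀ t) t :=
    fun t => h₃ t ▸ (hd₃ t).hasDerivAt
  have e1 : deriv ψ₀ = ψ₁ := funext h₀
  have e2 : deriv (deriv ψ₀) = fun t => ψ₂ t + L21 * Complex.exp t * ψ₀ t := by
    rw [e1]; exact funext h₁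
  -- second derivative data
  have hD2 : ∀ t : ℝ, HasDerivAt (fun t => ψ₂ t + L21 * Complex.exp t * ψ₀ t)
      (ψ₃ t + L11 * Complex.exp t * ψ₁ t +
        (L21 * Complex.exp t * ψ₀ t + L21 * Complex.exp t * ψ₁ t)) t := by
    intro t
    exact (hψ₂ t).add (((hexp t).const_mul L21).mul (hψ₀ t))
  have e3 : deriv (deriv (deriv ψ₀)) = fun t =>
      ψ₃ t + L11 * Complex.exp t * ψ₁ t +
        (L21 * Complex.exp t * ψ₀ t + L21 * Complex.exp t * ψ₁ t) := by
    rw [e2]; exact funext fun t => (hD2 t).deriv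
  refine ⟨by rw [e1]; exact hd₁, ?_, ?_, ?_⟩
  · rw [e2]
    exact hd₂.add ((hdexp.const_mul L21).mul hd₀)
  · rw [e3]
    exact (hd₃.add ((hdexp.const_mul L11).mul hd₁)).add
      (((hdexp.const_mul L21).mul hd₀).add ((hdexp.const_mul L21).mul hd₁))
  · intro t
    have hD3 : HasDerivAt (fun t =>
        ψ₃ t + L11 * Complex.exp t * ψ₁ t +
          (L21 * Complex.exp t * ψ₀ t + L21 * Complex.exp t * ψ₁ t))
        ((L01 * Complex.exp t * ψ₂ t + L22 * Complex.exp (2 * t) * ψ₀ t) +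
          (L11 * Complex.exp t * ψ₁ t +
            L11 * Complex.exp t * (ψ₂ t + L21 * Complex.exp t * ψ₀ t)) +
          ((L21 * Complex.exp t * ψ₀ t + L21 * Complex.exp t * ψ₁ t) +
            (L21 * Complex.exp t * ψ₁ t +
              L21 * Complex.exp t * (ψ₂ t + L21 * Complex.exp t * ψ₀ t)))) t := by
      exact ((hψ₃ t).add (((hexp t).const_mul L11).mul (hψ₁ t))).add
        ((((hexp t).const_mul L21).mul (hψ₀ t)).add
          (((hexp t).const_mul L21).mul (hψ₁ t)))
    rw [e3, hD3.deriv, e2, e1]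
    have h2t : Complex.exp (2 * (t : ℂ)) = Complex.exp t * Complex.exp t := by
      rw [two_mul, Complex.exp_add]
    rw [h2t]
    ring
end
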